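/- arXiv:0906.3885 — 8 statements merged into one kernel-verified Lean document; each statement's English description precedes it below -/
import Mathlib

section
/- If c : ℕ → Fin r is a finite coloring of the positive integers, then there exist a color i and an infinite set S of positive integers such that every sum of finitely many distinct elements of S has color i. -/
/-!
Mathlib's Hindman theorem, applied to the colouring restricted to `ℕ+`, gives a sequence `a` of
positive integers all of whose finite sums `FS a` (sums over finite sets of *indices*) have one
colour. Since `a` may repeat values, `S` is taken to be the set of block sums
`∑ i ∈ [k², (k+1)²), a i`: the blocks are disjoint, so a sum of distinct block sums is again an
element of `FS a`, and the `k`-th block sum is at least the block length `2k + 1`, so there are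
infinitely many of them.
-/

open Finset

theorem Finset.exists_image_eq_injOn_of_subset_range {ι α : Type*} [DecidableEq α] {f : ι → α}
    {F : Finset α} (hF : ↑F ⊆ Set.range f) :
    ∃ s : Finset ι, s.image f = F ∧ Set.InjOn f s := by
  obtain ⟨s, hsF, hinj⟩ := Set.exists_image_eq_injOn_of_subset_range hF
  have hs : s.Finite := Set.Finite.of_finite_image (hsF ▸ F.finite_toSet) hinj
  exact ⟨hs.toFinset, coe_injective (by simpa using hsF), by simpa using hinj⟩

namespace Hindman

theorem FS_map_subset_image {M N : Type*} [AddSemigroup M] [AddSemigroup N] (f : AddHom M N)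
    (a : Stream' M) : FS (a.map f) ⊆ f '' FS a := by
  suffices ∀ b, ∀ m ∈ FS b, ∀ a : Stream' M, b = a.map f → m ∈ f '' FS a from
    fun m hm => this _ m hm a rfl
  intro b m hm
  induction hm with
  | head' b =>
    rintro a rfl
    exact ⟨a.head, FS.head a, rfl⟩
  | tail' b m _ ih =>
    rintro a rfl
    obtain ⟨p, hp, rfl⟩ := ih a.tail (Stream'.map_tail f a).symm
    exact ⟨p, FS.tail a p hp, rfl⟩
  | cons' b m _ ih =>
    rintro a rfl
    obtain ⟨p, hp, rfl⟩ := ih a.tail (Stream'.map_tail f a).symm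
    exact ⟨a.head + p, FS.cons a p hp, map_add f _ _⟩

def squareBlockSum {M : Type*} [AddCommMonoid M] (a : Stream' M) (k : ℕ) : M :=
  ∑ i ∈ Ico (k ^ 2) ((k + 1) ^ 2), a.get i

theorem sum_squareBlockSum_mem_FS {M : Type*} [AddCommMonoid M] (a : Stream' M) {s : Finset ℕ}
    (hs : s.Nonempty) : ∑ k ∈ s, squareBlockSum a k ∈ FS a := by
  have hdisj : (s : Set ℕ).PairwiseDisjoint fun k => Ico (k ^ 2) ((k + 1) ^ 2) := by
    intro k _ l _ hkl
    have := (Monotone.pairwise_disjoint_on_Ico_succ (f := fun k : ℕ => k ^ 2)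
      (fun _ _ h => Nat.pow_le_pow_left h 2)) hkl
    simpa [Function.onFun, ← coe_Ico, disjoint_coe] using this
  unfold squareBlockSum
  rw [← sum_biUnion hdisj]
  obtain ⟨k, hk⟩ := hs
  have hk_mem : k ^ 2 ∈ Ico (k ^ 2) ((k + 1) ^ 2) :=
    mem_Ico.2 ⟨le_rfl, Nat.pow_lt_pow_left k.lt_succ_self two_ne_zero⟩
  exact FS.finsetSum a _ ⟨k ^ 2, mem_biUnion.2 ⟨k, hk, hk_mem⟩⟩

theorem le_squareBlockSum {a : Stream' ℕ} (ha : ∀ i, 0 < a.get i) (k : ℕ) :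
    k ≤ squareBlockSum a k := by
  have hcard : k ≤ #(Ico (k ^ 2) ((k + 1) ^ 2)) := by
    rw [Nat.card_Ico]
    have : (k + 1) ^ 2 = k ^ 2 + 2 * k + 1 := by ring
    omega
  calc k ≤ #(Ico (k ^ 2) ((k + 1) ^ 2)) • 1 := by simpa using hcard
    _ ≤ squareBlockSum a k := card_nsmul_le_sum _ _ _ fun i _ => ha i

theorem exists_infinite_forall_sum_mem_FS {a : Stream' ℕ} (ha : ∀ i, 0 < a.get i) :
    ∃ S : Set ℕ, S.Infinite ∧ ∀ F : Finset ℕ, ↑F ⊆ S → F.Nonempty → ∑ n ∈ F, n ∈ FS a := by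
  refine ⟨Set.range (squareBlockSum a), Set.infinite_of_not_bddAbove ?_, fun F hF hne => ?_⟩
  · rintro ⟨B, hB⟩
    have := hB ⟨B + 1, rfl⟩
    have := le_squareBlockSum ha (B + 1)
    omega
  · obtain ⟨s, rfl, hinj⟩ := exists_image_eq_injOn_of_subset_range hF
    rw [sum_image hinj]
    exact sum_squareBlockSum_mem_FS a (image_nonempty.1 hne)

end Hindman

open Hindman in
/-- Hindman's Theorem: for every finite coloring of the positive integers there are a
color `i` and an infinite set `S` of positive integers such that every sum of finitely
many distinct elements of `S` has color `i`. -/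
theorem hindman (r : ℕ) (c : ℕ → Fin r) :
    ∃ (i : Fin r) (S : Set ℕ), S.Infinite ∧ (∀ n ∈ S, 0 < n) ∧
      ∀ F : Finset ℕ, ↑F ⊆ S → F.Nonempty → c (∑ n ∈ F, n) = i := by
  obtain ⟨_, ⟨i, rfl⟩, a, ha⟩ := exists_FS_of_finite_cover
    (Set.range fun i : Fin r => {n : ℕ+ | c n = i}) (Set.finite_range _)
    (fun n _ => ⟨_, ⟨c n, rfl⟩, rfl⟩)
  set b := a.map PNat.coeAddHom
  have hFS : ∀ m ∈ FS b, 0 < m ∧ c m = i := by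
    rintro _ hm
    obtain ⟨p, hp, rfl⟩ := FS_map_subset_image _ a hm
    exact ⟨p.pos, ha hp⟩
  obtain ⟨S, hS, hsum⟩ := exists_infinite_forall_sum_mem_FS (a := b) fun k => (a.get k).pos
  refine ⟨i, S, hS, fun n hn => ?_, fun F hF hne => (hFS _ (hsum F hF hne)).2⟩
  simpa using (hFS _ (hsum {n} (by simpa using hn) (singleton_nonempty n))).1
end

section
/- If c : Finset ℕ → Fin r is a finite coloring of the nonempty finite subsets of ℕ, then there exist a color i and an infinite pairwise-disjoint family 𝒮 of nonempty finite subsets of ℕ such that every nonempty union of finitely many members of 𝒮 has color i. -/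
/-!
Hindman's theorem in the additive monoid `Multiset ℕ`, applied to the sequence of singletons
`{0}, {1}, {2}, …`, whose finite sums are exactly the nonempty finite sets. Colouring only those
sums, by `c`, yields a sequence `b` all of whose finite sums are duplicate-free and of one colour.
Since `b j + b k` is duplicate-free, the `b k` are pairwise disjoint, and sums of pairwise
disjoint finite sets are their unions.
-/

/-- The set of nonempty unions of finitely many members of `𝒮`. -/
def NU (𝒮 : Set (Finset ℕ)) : Set (Finset ℕ) :=
  {T | T.Nonempty ∧ ∃ F : Finset (Finset ℕ), ↑F ⊆ 𝒮 ∧ T = F.sup id}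

/-- `𝒮` is an IP family: closed under finite unions and containing an infinite
pairwise disjoint subfamily. -/
def IsIP (𝒮 : Set (Finset ℕ)) : Prop :=
  (∀ A ∈ 𝒮, ∀ B ∈ 𝒮, A ∪ B ∈ 𝒮) ∧
    ∃ 𝒟 ⊆ 𝒮, 𝒟.Infinite ∧ 𝒟.Pairwise Disjoint

/-- `𝒮` generates an IP set: it contains infinitely many pairwise disjoint elements. -/
def GeneratesIP (𝒮 : Set (Finset ℕ)) : Prop :=
  ∃ 𝒟 ⊆ 𝒮, 𝒟.Infinite ∧ 𝒟.Pairwise Disjoint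

/-- `𝒮 − ℬ`: the members of `𝒮` disjoint from every member of `ℬ`. -/
def SMinus (𝒮 ℬ : Set (Finset ℕ)) : Set (Finset ℕ) :=
  {T ∈ 𝒮 | ∀ B ∈ ℬ, Disjoint T B}

/-- `𝒟` half-matches `B` with respect to the coloring `c`. -/
def HalfMatch {α : Type*} (c : Finset ℕ → α) (𝒟 : Set (Finset ℕ)) (B : Finset ℕ) : Prop :=
  ∃ D ∈ 𝒟, Disjoint D B ∧ c B = c (D ∪ B)

/-- `𝒟` full-matches `B` with respect to the coloring `c`. -/
def FullMatch {α : Type*} (c : Finset ℕ → α) (𝒟 : Set (Finset ℕ)) (B : Finset ℕ) : Prop :=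
  ∃ D ∈ 𝒟, Disjoint D B ∧ c D = c B ∧ c B = c (D ∪ B)

open Hindman Function

theorem Hindman.exists_finsetSum_eq_of_mem_FS {M : Type*} [AddCommMonoid M] {a : Stream' M}
    {m : M} (hm : m ∈ FS a) : ∃ s : Finset ℕ, s.Nonempty ∧ ∑ i ∈ s, a.get i = m := by
  induction hm with
  | head' a => exact ⟨{0}, Finset.singleton_nonempty 0, Finset.sum_singleton _ _⟩
  | tail' a m _ ih =>
    obtain ⟨s, hs, rfl⟩ := ih
    exact ⟨s.map (addRightEmbedding 1), hs.map, by simp [Stream'.get_tail]⟩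
  | cons' a m _ ih =>
    obtain ⟨s, -, rfl⟩ := ih
    refine ⟨insert 0 (s.map (addRightEmbedding 1)), Finset.insert_nonempty _ _, ?_⟩
    rw [Finset.sum_insert (by simp)]
    simp [Stream'.get_tail]

theorem Multiset.toFinset_finsetSum {ι α : Type*} [DecidableEq α] (K : Finset ι)
    (f : ι → Multiset α) : (∑ k ∈ K, f k).toFinset = K.sup fun k => (f k).toFinset := by
  classical
  induction K using Finset.induction_on with
  | empty => simp
  | insert k K hk ih => rw [Finset.sum_insert hk, Multiset.toFinset_add, ih, Finset.sup_insert]; rfl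

theorem Hindman.exists_FS_toFinset_monochromatic {α : Type*} [Finite α] (c : Finset ℕ → α) :
    ∃ (i : α) (b : Stream' (Multiset ℕ)),
      ∀ m ∈ FS b, m.Nodup ∧ m ≠ 0 ∧ c m.toFinset = i := by
  classical
  let part : α → Set (Multiset ℕ) := fun i => {m | m.Nodup ∧ m ≠ 0 ∧ c m.toFinset = i}
  have hcover : FS (fun n => {n} : Stream' (Multiset ℕ)) ⊆ ⋃₀ Set.range part := by
    intro m hm
    obtain ⟨s, hs, rfl⟩ := exists_finsetSum_eq_of_mem_FS hm
    change ∑ i ∈ s, ({i} : Multiset ℕ) ∈ _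
    rw [Finset.sum_multiset_singleton]
    exact ⟨_, Set.mem_range_self (c s), s.nodup, Finset.val_eq_zero.not.2 hs.ne_empty,
      by rw [Finset.val_toFinset]⟩
  obtain ⟨_, ⟨i, rfl⟩, b, hb⟩ :=
    FS_partition_regular _ (Set.range part) (Set.finite_range part) hcover
  exact ⟨i, b, hb⟩

theorem Hindman.disjoint_get_of_FS_nodup {α : Type*} {b : Stream' (Multiset α)}
    (hb : ∀ m ∈ FS b, m.Nodup) {j k : ℕ} (hjk : j ≠ k) : Disjoint (b.get j) (b.get k) := by
  rcases hjk.lt_or_gt with h | h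
  · exact (Multiset.nodup_add.1 (hb _ (FS.add_two b j k h))).2.2
  · exact (Multiset.nodup_add.1 (hb _ (FS.add_two b k j h))).2.2.symm

/-- The Finite Unions Theorem. -/
theorem finite_unions (r : ℕ) (c : Finset ℕ → Fin r) :
    ∃ (i : Fin r) (𝒮 : Set (Finset ℕ)), 𝒮.Infinite ∧ (∀ S ∈ 𝒮, S.Nonempty) ∧
      𝒮.Pairwise Disjoint ∧
      ∀ F : Finset (Finset ℕ), ↑F ⊆ 𝒮 → F.Nonempty → c (F.sup id) = i := by
  classical
  obtain ⟨i, b, hb⟩ := exists_FS_toFinset_monochromatic c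
  let g : ℕ → Finset ℕ := fun n => (b.get n).toFinset
  have hne : ∀ n, (g n).Nonempty := fun n =>
    Multiset.toFinset_nonempty.2 (hb _ (FS.singleton b n)).2.1
  have hdisj : Pairwise (Disjoint on g) := fun j k hjk =>
    Multiset.disjoint_toFinset.2 (disjoint_get_of_FS_nodup (fun m hm => (hb m hm).1) hjk)
  have hinj : g.Injective := fun j k hjk => by
    by_contra h
    have hkk := hdisj h
    simp only [onFun, hjk, disjoint_self] at hkk
    exact (hne k).ne_empty hkk
  refine ⟨i, Set.range g, Set.infinite_range_of_injective hinj, Set.forall_mem_range.2 hne,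
    hdisj.range_pairwise, fun F hF hFne => ?_⟩
  rw [← Set.image_univ, Finset.subset_set_image_iff] at hF
  obtain ⟨K, -, rfl⟩ := hF
  rw [Finset.sup_image, Function.id_comp, ← Multiset.toFinset_finsetSum]
  exact (hb _ (FS.finsetSum b K (Finset.image_nonempty.1 hFne))).2.2
end

section
/- The Finite Unions Theorem implies Hindman's Theorem: assuming that every finite coloring of the nonempty finite subsets of ℕ admits an infinite pairwise-disjoint family all of whose nonempty finite unions are monochromatic, it follows that every finite coloring of the positive integers admits an infinite set all of whose nonempty finite sums of distinct elements are monochromatic. -/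
/-!
Transport the colouring along `n ↦ n.bitIndices`, a bijection `ℕ ≃ Finset ℕ`. Numbers whose
binary supports are pairwise disjoint add without carries, so their sum has as binary support the
union of their supports; hence the preimage of a pairwise-disjoint family with monochromatic
finite unions has monochromatic finite sums.
-/

namespace Finset

theorem equivBitIndices_symm_ne_zero {s : Finset ℕ} (hs : s.Nonempty) :
    equivBitIndices.symm s ≠ 0 :=
  (sum_pos (fun i _ => Nat.two_pow_pos i) hs).ne'

theorem equivBitIndices_sum {F : Finset ℕ}
    (hF : (F : Set ℕ).PairwiseDisjoint equivBitIndices) :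
    equivBitIndices (∑ n ∈ F, n) = F.sup equivBitIndices := by
  rw [← Equiv.eq_symm_apply, equivBitIndices_symm_apply, sup_eq_biUnion, sum_biUnion hF]
  exact sum_congr rfl fun n _ => (sum_toFinset_bitIndices_two_pow n).symm

end Finset

open Finset

/-- The Finite Unions Theorem implies Hindman's Theorem. -/
theorem finite_unions_implies_hindman
    (hFU : ∀ (r : ℕ) (c : Finset ℕ → Fin r),
      ∃ (i : Fin r) (𝒮 : Set (Finset ℕ)), 𝒮.Infinite ∧ (∀ S ∈ 𝒮, S.Nonempty) ∧
        𝒮.Pairwise Disjoint ∧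
        ∀ F : Finset (Finset ℕ), ↑F ⊆ 𝒮 → F.Nonempty → c (F.sup id) = i) :
    ∀ (r : ℕ) (c : ℕ → Fin r),
      ∃ (i : Fin r) (S : Set ℕ), S.Infinite ∧ (∀ n ∈ S, 0 < n) ∧
        ∀ F : Finset ℕ, ↑F ⊆ S → F.Nonempty → c (∑ n ∈ F, n) = i := by
  intro r c
  set e : ℕ ≃ Finset ℕ := equivBitIndices
  obtain ⟨i, 𝒮, h𝒮_inf, h𝒮_ne, h𝒮_disj, h𝒮_mono⟩ := hFU r (c ∘ e.symm)
  refine ⟨i, e ⁻¹' 𝒮, h𝒮_inf.preimage (by simp), ?_, fun F hF hF_ne => ?_⟩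
  · intro n hn
    rw [Nat.pos_iff_ne_zero, ← e.symm_apply_apply n]
    exact equivBitIndices_symm_ne_zero (h𝒮_ne _ hn)
  · have hF_map : ↑(F.map e.toEmbedding) ⊆ 𝒮 := by
      rwa [coe_map, Set.image_subset_iff]
    have hF_disj : (F : Set ℕ).PairwiseDisjoint e :=
      (e.injective.injOn.pairwise_image).mp (h𝒮_disj.mono (by simpa using hF_map))
    rw [e.eq_symm_apply.mpr (equivBitIndices_sum hF_disj), ← h𝒮_mono _ hF_map (hF_ne.map), sup_map]
    rfl
end

section
/- Let 𝒮 be a family of finite subsets of ℕ closed under unions of members with disjoint (separated) supports and containing an infinite pairwise-disjoint subfamily, let ℬ ⊆ 𝒮 be finite, and let c : NU(𝒮) → Fin r. Then either (1) there is a finite 𝒟 ⊆ 𝒮 − ℬ such that for every S ∈ 𝒮 − ℬ − 𝒟 there is D ∈ NU(𝒟) with max(D) < min(S) such that ℬ does not half-match D ∪ S, or (2) there is an IP subfamily 𝒯 ⊆ 𝒮 − ℬ such that ℬ half-matches every element of NU(𝒯). -/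
lemma NU_mono {X Y : Set (Finset ℕ)} (h : X ⊆ Y) : NU X ⊆ NU Y := by
  rintro T ⟨hne, F, hF, rfl⟩
  exact ⟨hne, F, hF.trans h, rfl⟩

lemma single_mem_NU {X : Set (Finset ℕ)} {A : Finset ℕ} (hA : A ∈ X) (hne : A.Nonempty) :
    A ∈ NU X := ⟨hne, {A}, by simpa using hA, by simp⟩

lemma NU_union {X : Set (Finset ℕ)} {A B : Finset ℕ} (hA : A ∈ NU X) (hB : B ∈ NU X) :
    A ∪ B ∈ NU X := by
  obtain ⟨hAne, F, hF, rfl⟩ := hA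
  obtain ⟨hBne, G, hG, rfl⟩ := hB
  refine ⟨hAne.mono Finset.subset_union_left, F ∪ G, ?_, ?_⟩
  · rw [Finset.coe_union]; exact Set.union_subset hF hG
  · rw [Finset.sup_union]; rfl

lemma sup_mem_NU {X : Set (Finset ℕ)} {ι : Type*} {I : Finset ι} (hI : I.Nonempty)
    {p : ι → Finset ℕ} (hp : ∀ i ∈ I, p i ∈ NU X) : I.sup p ∈ NU X := by
  classical
  induction I using Finset.cons_induction with
  | empty => exact absurd hI (by simp)
  | cons a F ha IH =>
    rw [Finset.sup_cons]
    rcases F.eq_empty_or_nonempty with rfl | hFne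
    · simpa using hp a (by simp)
    · have h1 : p a ∈ NU X := hp a (Finset.mem_cons_self _ _)
      have h2 : F.sup p ∈ NU X := IH hFne (fun i hi => hp i (Finset.mem_cons_of_mem hi))
      exact NU_union h1 h2

lemma NU_flatten {X : Set (Finset ℕ)} : NU (NU X) ⊆ NU X := by
  rintro T ⟨hne, F, hF, rfl⟩
  have hFne : F.Nonempty := by
    rcases F.eq_empty_or_nonempty with rfl | h
    · simp at hne
    · exact h
  exact sup_mem_NU hFne (fun A hA => hF hA)

lemma SMinus_anti {𝒮 X Y : Set (Finset ℕ)} (h : X ⊆ Y) : SMinus 𝒮 Y ⊆ SMinus 𝒮 X :=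
  fun T hT => ⟨hT.1, fun B hB => hT.2 B (h hB)⟩

lemma NU_subset_SMinus {𝒮 ℬ : Set (Finset ℕ)}
    (hclosed : ∀ A ∈ 𝒮, ∀ B ∈ 𝒮, Disjoint A B → A ∪ B ∈ 𝒮)
    {X : Set (Finset ℕ)} (hX : X ⊆ SMinus 𝒮 ℬ) (hdisj : X.Pairwise Disjoint)
    (hne : ∀ A ∈ X, A.Nonempty) : NU X ⊆ SMinus 𝒮 ℬ := by
  classical
  rintro T ⟨hTne, F, hF, rfl⟩
  have hFne : F.Nonempty := by
    rcases F.eq_empty_or_nonempty with rfl | h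
    · simp at hTne
    · exact h
  clear hTne
  induction F using Finset.cons_induction with
  | empty => exact absurd hFne (by simp)
  | cons a F ha IH =>
    have haX : a ∈ X := hF (by simp)
    have haS : a ∈ SMinus 𝒮 ℬ := hX haX
    rw [Finset.sup_cons]
    rcases F.eq_empty_or_nonempty with rfl | hFne'
    · simpa using haS
    · have hFX : ↑F ⊆ X := fun A hA => hF (Finset.mem_cons_of_mem hA)
      have hU : F.sup id ∈ SMinus 𝒮 ℬ := IH hFX hFne'
      have hdaU : Disjoint a (F.sup id) := by
        rw [Finset.disjoint_sup_right]
        intro b hb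
        have hbX : b ∈ X := hFX hb
        have : a ≠ b := fun h => ha (h ▸ hb)
        exact hdisj haX hbX this
      have : id a ⊔ F.sup id = a ∪ F.sup id := rfl
      rw [this]
      exact ⟨hclosed a haS.1 _ hU.1 hdaU,
        fun B hB => Finset.disjoint_union_left.mpr ⟨haS.2 B hB, hU.2 B hB⟩⟩

lemma isIP_NU {X : Set (Finset ℕ)} (hinf : X.Infinite) (hdisj : X.Pairwise Disjoint)
    (hne : ∀ A ∈ X, A.Nonempty) : IsIP (NU X) :=
  ⟨fun A hA B hB => NU_union hA hB,
   X, fun A hA => single_mem_NU hA (hne A hA), hinf, hdisj⟩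

lemma bad_finite (𝒟 : Set (Finset ℕ)) (hdisj : 𝒟.Pairwise Disjoint) (K : Finset ℕ) :
    {A ∈ 𝒟 | ¬ Disjoint A K}.Finite := by
  classical
  set S := {A ∈ 𝒟 | ¬ Disjoint A K}
  set φ : Finset ℕ → ℕ := fun A => if h : (A ∩ K).Nonempty then (A ∩ K).min' h else 0
  have hmem : ∀ A ∈ S, φ A ∈ A ∩ K := by
    intro A hA
    have hne' : (A ∩ K).Nonempty := by
      obtain ⟨x, hx1, hx2⟩ := Finset.not_disjoint_iff.mp hA.2
      exact ⟨x, Finset.mem_inter.mpr ⟨hx1, hx2⟩⟩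
    simp only [φ, dif_pos hne']
    exact Finset.min'_mem _ _
  have hinj : Set.InjOn φ S := by
    intro A hA B hB hAB
    by_contra hne2
    have h1 := hmem A hA
    have h2 := hmem B hB
    rw [hAB] at h1
    exact (Finset.disjoint_left.mp (hdisj hA.1 hB.1 hne2)
      (Finset.mem_inter.mp h1).1) (Finset.mem_inter.mp h2).1
  have himg : φ '' S ⊆ ↑K := by
    rintro _ ⟨A, hA, rfl⟩
    exact Finset.mem_coe.mpr (Finset.mem_inter.mp (hmem A hA)).2
  exact Set.Finite.of_finite_image (K.finite_toSet.subset himg) hinj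

/-- Lemma 3 of the paper (the dichotomy used to prove the half-matching lemma). -/
theorem half_match_dichotomy (r : ℕ) (𝒮 : Set (Finset ℕ))
    (hclosed : ∀ A ∈ 𝒮, ∀ B ∈ 𝒮, Disjoint A B → A ∪ B ∈ 𝒮)
    (hgen : GeneratesIP 𝒮)
    (ℬ : Finset (Finset ℕ)) (hℬ : ↑ℬ ⊆ 𝒮) (c : Finset ℕ → Fin r) :
    (∃ 𝒟 : Finset (Finset ℕ), ↑𝒟 ⊆ SMinus 𝒮 ↑ℬ ∧
        ∀ S ∈ SMinus 𝒮 (↑ℬ ∪ ↑𝒟), ∃ D ∈ NU ↑𝒟,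
          (∀ d ∈ D, ∀ s ∈ S, d < s) ∧ ¬ HalfMatch c ↑ℬ (D ∪ S)) ∨
    (∃ 𝒯 ⊆ SMinus 𝒮 ↑ℬ, IsIP 𝒯 ∧ ∀ T ∈ NU 𝒯, HalfMatch c ↑ℬ T) := by
  classical
  by_cases hP : ∀ 𝒟 : Finset (Finset ℕ), ↑𝒟 ⊆ SMinus 𝒮 ↑ℬ →
      ∃ S ∈ SMinus 𝒮 (↑ℬ ∪ ↑𝒟), S.Nonempty ∧
        ∀ D ∈ NU ↑𝒟, (∀ d ∈ D, ∀ s ∈ S, d < s) → HalfMatch c ↑ℬ (D ∪ S)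
  · -- Case P: build the IP family by recursion
    have hP' : ∀ 𝒟 : Finset (Finset ℕ), ∃ S : Finset ℕ,
        ↑𝒟 ⊆ SMinus 𝒮 ↑ℬ → S ∈ SMinus 𝒮 (↑ℬ ∪ ↑𝒟) ∧ S.Nonempty ∧
          ∀ D ∈ NU ↑𝒟, (∀ d ∈ D, ∀ s ∈ S, d < s) → HalfMatch c ↑ℬ (D ∪ S) := by
      intro 𝒟
      by_cases h : ↑𝒟 ⊆ SMinus 𝒮 ↑ℬ
      · obtain ⟨S, h1, h2, h3⟩ := hP 𝒟 h
        exact ⟨S, fun _ => ⟨h1, h2, h3⟩⟩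
      · exact ⟨∅, fun hh => absurd hh h⟩
    choose step hstep using hP'
    let acc : ℕ → Finset (Finset ℕ) := fun n => Nat.rec (motive := fun _ => Finset (Finset ℕ)) ∅ (fun _ ih => insert (step ih) ih) n
    let f : ℕ → Finset ℕ := fun n => step (acc n)
    have hacc_succ : ∀ n, acc (n+1) = insert (f n) (acc n) := fun n => rfl
    have hsub : ∀ n, (↑(acc n) : Set (Finset ℕ)) ⊆ SMinus 𝒮 ↑ℬ := by
      intro n
      induction n with
      | zero =>
        rw [show acc 0 = ∅ from rfl]
        simp
      | succ n ih =>
        rw [hacc_succ, Finset.coe_insert, Set.insert_subset_iff]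
        exact ⟨SMinus_anti Set.subset_union_left ((hstep (acc n) ih).1), ih⟩
    have hf : ∀ n, f n ∈ SMinus 𝒮 (↑ℬ ∪ ↑(acc n)) ∧ (f n).Nonempty ∧
        ∀ D ∈ NU ↑(acc n), (∀ d ∈ D, ∀ s ∈ f n, d < s) → HalfMatch c ↑ℬ (D ∪ f n) :=
      fun n => hstep (acc n) (hsub n)
    have hfS : ∀ n, f n ∈ SMinus 𝒮 ↑ℬ := fun n => SMinus_anti Set.subset_union_left (hf n).1
    have hfne : ∀ n, (f n).Nonempty := fun n => (hf n).2.1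
    have hmem_acc : ∀ m n, m < n → f m ∈ acc n := by
      intro m n h
      induction n with
      | zero => omega
      | succ n ih =>
        rw [hacc_succ]
        rcases Nat.lt_succ_iff_lt_or_eq.mp h with h' | rfl
        · exact Finset.mem_insert_of_mem (ih h')
        · exact Finset.mem_insert_self _ _
    have hdisj_f : ∀ m n, m < n → Disjoint (f n) (f m) := fun m n h =>
      (hf n).1.2 (f m) (Set.mem_union_right _ (Finset.mem_coe.mpr (hmem_acc m n h)))
    have hdisj_f' : ∀ m n, m ≠ n → Disjoint (f m) (f n) := by
      intro m n h
      rcases lt_or_gt_of_ne h with h' | h'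
      · exact (hdisj_f m n h').symm
      · exact hdisj_f n m h'
    have hinj_f : Function.Injective f := by
      intro m n h
      by_contra hne2
      have hd := hdisj_f' m n hne2
      rw [h] at hd
      exact (hfne n).ne_empty (by simpa using disjoint_self.mp hd)
    have hfin : ∀ K : Finset ℕ, {j : ℕ | ¬ Disjoint (f j) K}.Finite := by
      intro K
      have h1 : {A ∈ Set.range f | ¬ Disjoint A K}.Finite := by
        apply bad_finite
        rintro _ ⟨m, rfl⟩ _ ⟨n, rfl⟩ hne2
        exact hdisj_f' m n (fun h => hne2 (by rw [h]))
      have h2 : {j : ℕ | ¬ Disjoint (f j) K} = f ⁻¹' {A ∈ Set.range f | ¬ Disjoint A K} := by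
        ext j
        simp only [Set.mem_setOf_eq, Set.mem_preimage, Set.mem_range]
        exact ⟨fun h => ⟨⟨j, rfl⟩, h⟩, fun h => h.2⟩
      rw [h2]
      exact Set.Finite.preimage hinj_f.injOn h1
    have hnext_ex : ∀ k : ℕ, ∃ j, k < j ∧ ∀ x ∈ f k, ∀ y ∈ f j, x < y := by
      intro k
      have hc := (hfin (Finset.range ((f k).sup id + 1))).infinite_compl
      obtain ⟨j, hj, hkj⟩ := hc.exists_gt k
      refine ⟨j, hkj, fun x hx y hy => ?_⟩
      have hdj : Disjoint (f j) (Finset.range ((f k).sup id + 1)) := by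
        by_contra hcon
        exact hj hcon
      have hy' : y ∉ Finset.range ((f k).sup id + 1) := Finset.disjoint_left.mp hdj hy
      rw [Finset.mem_range, not_lt] at hy'
      calc x ≤ (f k).sup id := Finset.le_sup (f := id) hx
        _ < y := by omega
    choose nxt hnxt using hnext_ex
    let g : ℕ → ℕ := fun n => Nat.rec (motive := fun _ => ℕ) 0 (fun _ ih => nxt ih) n
    have hg_lt : ∀ n, g n < g (n+1) := fun n => (hnxt (g n)).1
    have hg_mono : StrictMono g := strictMono_nat_of_lt_succ hg_lt
    have hg_step : ∀ n, ∀ x ∈ f (g n), ∀ y ∈ f (g (n+1)), x < y := fun n => (hnxt (g n)).2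
    have hchain : ∀ m n, m < n → ∀ x ∈ f (g m), ∀ y ∈ f (g n), x < y := by
      intro m n h
      induction n with
      | zero => omega
      | succ n ih =>
        rcases Nat.lt_succ_iff_lt_or_eq.mp h with h' | rfl
        · intro x hx y hy
          obtain ⟨z, hz⟩ := hfne (g n)
          exact lt_trans (ih h' x hx z hz) (hg_step n z hz y hy)
        · exact hg_step m
    let Tf : ℕ → Finset ℕ := fun i => f (g (2*i)) ∪ f (g (2*i+1))
    have hTf_ne : ∀ i, (Tf i).Nonempty := fun i =>
      (hfne (g (2*i))).mono Finset.subset_union_left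
    have hTf_disj : ∀ i j, i ≠ j → Disjoint (Tf i) (Tf j) := by
      intro i j hij
      have hne4 : ∀ a b : ℕ, a ≠ b → Disjoint (f (g a)) (f (g b)) := fun a b hab =>
        hdisj_f' (g a) (g b) (fun h => hab (hg_mono.injective h))
      simp only [Tf, Finset.disjoint_union_left, Finset.disjoint_union_right]
      exact ⟨⟨hne4 (2*i) (2*j) (by omega), hne4 (2*i+1) (2*j) (by omega)⟩,
             hne4 (2*i) (2*j+1) (by omega), hne4 (2*i+1) (2*j+1) (by omega)⟩
    have hTf_inj : Function.Injective Tf := by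
      intro i j h
      by_contra hne2
      have hd := hTf_disj i j hne2
      rw [h] at hd
      exact (hTf_ne j).ne_empty (by simpa using disjoint_self.mp hd)
    have hTf_sub : ∀ i, Tf i ∈ SMinus 𝒮 ↑ℬ := by
      intro i
      have h1 := hfS (g (2*i))
      have h2 := hfS (g (2*i+1))
      have hlt : (2*i) < (2*i+1) := by omega
      have hd : Disjoint (f (g (2*i))) (f (g (2*i+1))) :=
        (hdisj_f (g (2*i)) (g (2*i+1)) (hg_mono hlt)).symm
      exact ⟨hclosed _ h1.1 _ h2.1 hd,
        fun B hB => Finset.disjoint_union_left.mpr ⟨h1.2 B hB, h2.2 B hB⟩⟩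
    have hXsub : Set.range Tf ⊆ SMinus 𝒮 ↑ℬ := by rintro _ ⟨i, rfl⟩; exact hTf_sub i
    have hXdisj : (Set.range Tf).Pairwise Disjoint := by
      rintro _ ⟨i, rfl⟩ _ ⟨j, rfl⟩ hne2
      exact hTf_disj i j (fun h => hne2 (by rw [h]))
    have hXne : ∀ A ∈ Set.range Tf, A.Nonempty := by rintro _ ⟨i, rfl⟩; exact hTf_ne i
    refine Or.inr ⟨NU (Set.range Tf), NU_subset_SMinus hclosed hXsub hXdisj hXne,
      isIP_NU (Set.infinite_range_of_injective hTf_inj) hXdisj hXne, fun T hT => ?_⟩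
    obtain ⟨hTne, F, hF, hTeq⟩ := NU_flatten hT
    have hinv : ∀ A ∈ F, Tf (Function.invFun Tf A) = A := fun A hA => Function.invFun_eq (hF hA)
    set I : Finset ℕ := F.image (Function.invFun Tf) with hI
    have hsupI : I.sup Tf = F.sup id := by
      rw [hI, Finset.sup_image]
      exact Finset.sup_congr rfl (fun A hA => hinv A hA)
    have hFne : F.Nonempty := by
      rcases F.eq_empty_or_nonempty with rfl | h
      · rw [hTeq] at hTne; simp at hTne
      · exact h
    have hIne : I.Nonempty := hFne.image _
    have hkI : I.max' hIne ∈ I := I.max'_mem hIne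
    set k := I.max' hIne with hk
    have hTdecomp : T = Tf k ∪ (I.erase k).sup Tf := by
      have hstep2 : I.sup Tf = Tf k ⊔ (I.erase k).sup Tf := by
        conv_lhs => rw [← Finset.insert_erase hkI]
        rw [Finset.sup_insert]
      rw [hTeq, ← hsupI, hstep2]
      rfl
    have hfmemNU : ∀ j, j < g (2*k+1) → f j ∈ NU ↑(acc (g (2*k+1))) := fun j hj =>
      single_mem_NU (Finset.mem_coe.mpr (hmem_acc j _ hj)) (hfne j)
    have hilt : ∀ i ∈ I.erase k, i < k := by
      intro i hi
      exact lt_of_le_of_ne (I.le_max' i (Finset.mem_of_mem_erase hi)) (Finset.ne_of_mem_erase hi)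
    have hTfNU : ∀ i ∈ I.erase k, Tf i ∈ NU ↑(acc (g (2*k+1))) := by
      intro i hi
      have hik := hilt i hi
      exact NU_union (hfmemNU _ (hg_mono (by omega : 2*i < 2*k+1)))
        (hfmemNU _ (hg_mono (by omega : 2*i+1 < 2*k+1)))
    have hDNU : (I.erase k).sup Tf ∪ f (g (2*k)) ∈ NU ↑(acc (g (2*k+1))) := by
      rcases (I.erase k).eq_empty_or_nonempty with he | hne2
      · rw [he]
        simp only [Finset.sup_empty, Finset.bot_eq_empty, Finset.empty_union]
        exact hfmemNU _ (hg_mono (by omega : 2*k < 2*k+1))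
      · exact NU_union (sup_mem_NU hne2 hTfNU) (hfmemNU _ (hg_mono (by omega : 2*k < 2*k+1)))
    have hbelow : ∀ d ∈ (I.erase k).sup Tf ∪ f (g (2*k)), ∀ s ∈ f (g (2*k+1)), d < s := by
      intro d hd s hs
      rw [Finset.mem_union] at hd
      rcases hd with hd | hd
      · obtain ⟨i, hi, hdi⟩ := Finset.mem_sup.mp hd
        have hik := hilt i hi
        have hdi' : d ∈ f (g (2*i)) ∪ f (g (2*i+1)) := hdi
        rw [Finset.mem_union] at hdi'
        rcases hdi' with h | h
        · exact hchain (2*i) (2*k+1) (by omega) d h s hs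
        · exact hchain (2*i+1) (2*k+1) (by omega) d h s hs
      · exact hchain (2*k) (2*k+1) (by omega) d hd s hs
    have hHM := (hf (g (2*k+1))).2.2 _ hDNU hbelow
    have heq : ((I.erase k).sup Tf ∪ f (g (2*k))) ∪ f (g (2*k+1)) = T := by
      rw [hTdecomp, Finset.union_assoc]
      have : Tf k = f (g (2*k)) ∪ f (g (2*k+1)) := rfl
      rw [this, Finset.union_comm]
    rw [heq] at hHM
    exact hHM
  · push_neg at hP
    obtain ⟨𝒟₀, h𝒟₀sub, hQ⟩ := hP
    by_cases hΦ : ∀ D ∈ NU (SMinus 𝒮 ↑ℬ), HalfMatch c ↑ℬ D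
    · -- option (2) via infinite disjoint family
      obtain ⟨𝒟, h𝒟S, hinf, hdisj⟩ := hgen
      set X : Set (Finset ℕ) := (𝒟 \ {A ∈ 𝒟 | ¬ Disjoint A (ℬ.sup id)}) \ {∅} with hXdef
      have hXsub : X ⊆ SMinus 𝒮 ↑ℬ := by
        rintro A ⟨⟨hA𝒟, hAdisj⟩, -⟩
        refine ⟨h𝒟S hA𝒟, fun B hB => ?_⟩
        have : Disjoint A (ℬ.sup id) := by
          by_contra hcon
          exact hAdisj ⟨hA𝒟, hcon⟩
        exact this.mono_right (Finset.le_sup (f := id) hB)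
      have hXinf : X.Infinite :=
        ((hinf.diff (bad_finite 𝒟 hdisj (ℬ.sup id))).diff (Set.finite_singleton ∅))
      have hXdisj : X.Pairwise Disjoint :=
        hdisj.mono (fun A hA => hA.1.1)
      have hXne : ∀ A ∈ X, A.Nonempty := by
        rintro A ⟨-, hA⟩
        rw [Finset.nonempty_iff_ne_empty]
        simpa using hA
      refine Or.inr ⟨NU X, NU_subset_SMinus hclosed hXsub hXdisj hXne,
        isIP_NU hXinf hXdisj hXne, fun T hT => ?_⟩
      exact hΦ T (NU_mono hXsub (NU_flatten hT))
    · -- option (1)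
      push_neg at hΦ
      obtain ⟨D₀, hD₀NU, hD₀⟩ := hΦ
      obtain ⟨hD₀ne, F₀, hF₀, hD₀eq⟩ := hD₀NU
      refine Or.inl ⟨𝒟₀ ∪ F₀, ?_, ?_⟩
      · rw [Finset.coe_union]; exact Set.union_subset h𝒟₀sub hF₀
      · intro S hS
        rcases S.eq_empty_or_nonempty with rfl | hSne
        · refine ⟨D₀, ⟨hD₀ne, F₀, ?_, hD₀eq⟩, fun d _ s hs => absurd hs (Finset.notMem_empty s), ?_⟩
          · rw [Finset.coe_union]; exact Set.subset_union_right
          · rwa [Finset.union_empty]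
        · have hS' : S ∈ SMinus 𝒮 (↑ℬ ∪ ↑𝒟₀) := by
            refine SMinus_anti ?_ hS
            rw [Finset.coe_union]
            exact Set.union_subset_union_right _ Set.subset_union_left
          obtain ⟨D, hDNU, hbelow, hnHM⟩ := hQ S hS' hSne
          refine ⟨D, NU_mono ?_ hDNU, hbelow, hnHM⟩
          rw [Finset.coe_union]; exact Set.subset_union_left
end

section
/- Let 𝒮 be an IP family of finite subsets of ℕ and let c : NU(𝒮) → Fin r. Then either (1) there is an IP family 𝒮' ⊆ 𝒮 and a color i such that c(S) ≠ i for every S ∈ NU(𝒮'), or (2) there is a finite collection ℬ ⊆ NU(𝒮) and an IP family 𝒯 ⊆ 𝒮 − ℬ such that for every T ∈ NU(𝒯) there is B ∈ ℬ with B ∩ T = ∅ and c(T) = c(B) = c(B ∪ T). -/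
/-! With at least two colours alternative (1) always holds: by the finite unions theorem
(Hindman's theorem for the monoid of finite sets under disjoint union, overlapping products
being sent to an absorbing element), any IP family contains an IP subfamily on whose finite
unions `c` is constant, and that subfamily avoids every other colour. With at most one colour
alternative (2) holds with `ℬ = {B}` for any nonempty `B ∈ 𝒮` and `𝒯 = 𝒮 − {B}`. -/

open Function Hindman

def FU {α : Type*} [DecidableEq α] (X : ℕ → Finset α) : Set (Finset α) :=
  {T | ∃ I : Finset ℕ, I.Nonempty ∧ T = I.sup X}

section FU

variable {α : Type*} [DecidableEq α] {X : ℕ → Finset α}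

theorem supClosed_FU : SupClosed (FU X) := by
  rintro _ ⟨I, hI, rfl⟩ _ ⟨J, -, rfl⟩
  exact ⟨I ∪ J, hI.mono Finset.subset_union_left, (Finset.sup_union).symm⟩

theorem mem_FU_self (i : ℕ) : X i ∈ FU X :=
  ⟨{i}, Finset.singleton_nonempty i, Finset.sup_singleton.symm⟩

theorem FU_subset {𝒮 : Set (Finset α)} (h𝒮 : SupClosed 𝒮) (hX : ∀ i, X i ∈ 𝒮) : FU X ⊆ 𝒮 := by
  rintro _ ⟨I, hI, rfl⟩
  exact h𝒮.finsetSup_mem hI fun i _ => hX i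

theorem nonempty_of_mem_FU (hX : ∀ i, (X i).Nonempty) {T : Finset α} (hT : T ∈ FU X) :
    T.Nonempty := by
  obtain ⟨I, ⟨i, hi⟩, rfl⟩ := hT
  exact (hX i).mono (Finset.le_sup hi)

end FU

/-- Finite sets under disjoint union; `none` absorbs every product of overlapping sets. -/
abbrev DisjUnion (α : Type*) : Type _ := Option (Finset α)

namespace DisjUnion

variable {α : Type*} [DecidableEq α]

instance : Mul (DisjUnion α) :=
  ⟨fun x y => x.bind fun a => y.bind fun b => if Disjoint a b then some (a ∪ b) else none⟩

theorem some_mul_some (a b : Finset α) :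
    (some a : DisjUnion α) * some b = if Disjoint a b then some (a ∪ b) else none := rfl

@[simp] theorem none_mul (x : DisjUnion α) : none * x = none := rfl

@[simp] theorem mul_none (x : DisjUnion α) : x * none = none := by cases x <;> rfl

instance : One (DisjUnion α) := ⟨some ∅⟩

instance : CommMonoid (DisjUnion α) where
  mul_assoc := by
    rintro (_ | a) (_ | b) (_ | d) <;> try simp only [none_mul, mul_none]
    by_cases hab : Disjoint a b <;> by_cases hbd : Disjoint b d <;> by_cases had : Disjoint a d <;>
      simp [some_mul_some, hab, hbd, had, Finset.disjoint_union_left,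
        Finset.disjoint_union_right, Finset.union_assoc]
  one_mul := by rintro (_ | a) <;> simp [show (1 : DisjUnion α) = some ∅ from rfl, some_mul_some]
  mul_one := by rintro (_ | a) <;> simp [show (1 : DisjUnion α) = some ∅ from rfl, some_mul_some]
  mul_comm := by
    rintro (_ | a) (_ | b) <;> try simp only [none_mul, mul_none]
    simp [some_mul_some, disjoint_comm, Finset.union_comm]

theorem prod_some {ι : Type*} (s : Finset ι) {X : ι → Finset α}
    (hX : (s : Set ι).PairwiseDisjoint X) :
    ∏ i ∈ s, (some (X i) : DisjUnion α) = some (s.sup X) := by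
  classical
  induction s using Finset.induction_on with
  | empty => rfl
  | insert i s hi ih =>
    rw [Finset.coe_insert, Set.pairwiseDisjoint_insert] at hX
    have hdisj : Disjoint (X i) (s.sup X) :=
      Finset.disjoint_sup_right.2 fun j hj => hX.2 j hj (ne_of_mem_of_not_mem hj hi).symm
    rw [Finset.prod_insert hi, ih hX.1, Finset.sup_insert, some_mul_some, if_pos hdisj]
    rfl

theorem sup_mem_FP {X : ℕ → Finset α} (hX : Pairwise (Disjoint on X)) {I : Finset ℕ}
    (hI : I.Nonempty) : some (I.sup X) ∈ FP (fun i => some (X i) : Stream' (DisjUnion α)) :=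
  prod_some I (hX.set_pairwise _) ▸ FP.finsetProd _ I hI

/-- The shift `n` is what keeps the index sets of the two factors of a product apart. -/
theorem exists_sup_of_mem_FP {D : ℕ → Finset α} (hD : Pairwise (Disjoint on D))
    {g : Stream' (DisjUnion α)} {m : DisjUnion α} (hm : m ∈ FP g) (n : ℕ)
    (hg : ∀ i, g.get i = some (D (n + i))) :
    ∃ I : Finset ℕ, I.Nonempty ∧ (∀ j ∈ I, n ≤ j) ∧ m = some (I.sup D) := by
  induction hm generalizing n with
  | head' a => exact ⟨{n}, Finset.singleton_nonempty n, by simp, by simpa using hg 0⟩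
  | tail' a m _ ih =>
    obtain ⟨I, hI, hIn, rfl⟩ := ih (n + 1) fun i => by
      rw [Stream'.get_tail, hg, Nat.add_right_comm, Nat.add_assoc]
    exact ⟨I, hI, fun j hj => (hIn j hj).trans' n.le_succ, rfl⟩
  | cons' a m _ ih =>
    obtain ⟨I, hI, hIn, rfl⟩ := ih (n + 1) fun i => by
      rw [Stream'.get_tail, hg, Nat.add_right_comm, Nat.add_assoc]
    have hdisj : Disjoint (D n) (I.sup D) :=
      Finset.disjoint_sup_right.2 fun j hj => hD (by have := hIn j hj; omega)
    refine ⟨insert n I, Finset.insert_nonempty n I, ?_, ?_⟩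
    · simpa using fun j hj => (hIn j hj).trans' n.le_succ
    · rw [Stream'.head, hg 0, Nat.add_zero, some_mul_some, if_pos hdisj, Finset.sup_insert]
      rfl

theorem mem_FP_iff {D : ℕ → Finset α} (hD : Pairwise (Disjoint on D)) {m : DisjUnion α} :
    m ∈ FP (fun i => some (D i) : Stream' (DisjUnion α)) ↔ ∃ T ∈ FU D, m = some T := by
  constructor
  · intro hm
    obtain ⟨I, hI, -, rfl⟩ := exists_sup_of_mem_FP hD hm 0 fun i => by simp [Stream'.get]
    exact ⟨_, ⟨I, hI, rfl⟩, rfl⟩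
  · rintro ⟨_, ⟨I, hI, rfl⟩, rfl⟩
    exact sup_mem_FP hD hI

end DisjUnion

/-- Hindman's finite unions theorem. -/
theorem exists_monochromatic_FU {α β : Type*} [DecidableEq α] [Finite β] (c : Finset α → β)
    {D : ℕ → Finset α} (hD : Pairwise (Disjoint on D)) :
    ∃ X : ℕ → Finset α, Pairwise (Disjoint on X) ∧ (∀ i, X i ∈ FU D) ∧
      ∃ b, ∀ T ∈ FU X, c T = b := by
  set g : Stream' (DisjUnion α) := fun i => some (D i)
  let part (b : β) : Set (DisjUnion α) := {m | m ∈ FP g ∧ ∃ T, m = some T ∧ c T = b}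
  have hcov : FP g ⊆ ⋃₀ Set.range part := by
    intro m hm
    obtain ⟨T, -, rfl⟩ := (DisjUnion.mem_FP_iff hD).1 hm
    exact ⟨part (c T), ⟨_, rfl⟩, hm, T, rfl, rfl⟩
  obtain ⟨_, ⟨b, rfl⟩, y, hy⟩ := FP_partition_regular g _ (Set.finite_range part) hcov
  choose X hXD hyX using fun i => (DisjUnion.mem_FP_iff hD).1 (hy (FP.singleton y i)).1
  obtain rfl : y = fun i => some (X i) := funext hyX
  have hX : Pairwise (Disjoint on X) := by
    refine (pairwise_disjoint_on X).2 fun i k hik => ?_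
    obtain ⟨T, -, hT⟩ := (DisjUnion.mem_FP_iff hD).1 (hy (FP.mul_two _ i k hik)).1
    by_contra h
    simp [Stream'.get, DisjUnion.some_mul_some, h] at hT
  refine ⟨X, hX, hXD, b, ?_⟩
  rintro T ⟨I, hI, rfl⟩
  obtain ⟨T', hT', hcT'⟩ := (hy (DisjUnion.sup_mem_FP hX hI)).2
  rwa [Option.some.inj hT']

section IP

variable {𝒮 : Set (Finset ℕ)}

theorem IsIP.supClosed (hS : IsIP 𝒮) : SupClosed 𝒮 := fun _ hA _ hB => hS.1 _ hA _ hB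

theorem SupClosed.sMinus (hS : SupClosed 𝒮) (ℬ : Set (Finset ℕ)) : SupClosed (SMinus 𝒮 ℬ) :=
  fun _ hA _ hB => ⟨hS hA.1 hB.1, fun C hC => (hA.2 C hC).sup_left (hB.2 C hC)⟩

theorem mem_NU {T : Finset ℕ} (hT : T ∈ 𝒮) (hne : T.Nonempty) : T ∈ NU 𝒮 :=
  ⟨hne, {T}, by simpa using hT, by simp⟩

theorem NU_subset_self (hS : SupClosed 𝒮) : NU 𝒮 ⊆ 𝒮 := by
  rintro _ ⟨hne, F, hF, rfl⟩
  obtain rfl | hFne := F.eq_empty_or_nonempty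
  · simp at hne
  · exact hS.finsetSup_mem hFne fun T hT => hF hT

theorem IsIP.exists_seq (hS : IsIP 𝒮) :
    ∃ D : ℕ → Finset ℕ, Pairwise (Disjoint on D) ∧ (∀ i, (D i).Nonempty) ∧ ∀ i, D i ∈ 𝒮 := by
  obtain ⟨-, 𝒟, h𝒟S, h𝒟, h𝒟disj⟩ := hS
  let e := (h𝒟.sdiff (Set.finite_singleton ∅)).natEmbedding
  refine ⟨fun i => e i, fun i j hij => h𝒟disj (e i).2.1 (e j).2.1 ?_,
    fun i => Finset.nonempty_iff_ne_empty.2 (e i).2.2, fun i => h𝒟S (e i).2.1⟩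
  exact fun h => hij (e.injective (Subtype.ext h))

theorem isIP_of_seq (hS : SupClosed 𝒮) {D : ℕ → Finset ℕ} (hD : Pairwise (Disjoint on D))
    (hne : ∀ i, (D i).Nonempty) (hDS : ∀ i, D i ∈ 𝒮) : IsIP 𝒮 := by
  have hinj : Injective D := fun i j h => by
    by_contra hij
    have hii : Disjoint (D i) (D j) := hD hij
    rw [h, disjoint_self] at hii
    exact (hne j).ne_empty hii
  exact ⟨fun _ hA _ hB => hS hA hB, Set.range D, Set.range_subset_iff.2 hDS,
    Set.infinite_range_of_injective hinj, hD.range_pairwise⟩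

theorem IsIP.exists_monochromatic {β : Type*} [Finite β] (hS : IsIP 𝒮) (c : Finset ℕ → β) :
    ∃ 𝒮' ⊆ 𝒮, IsIP 𝒮' ∧ ∃ b, ∀ S ∈ NU 𝒮', c S = b := by
  obtain ⟨D, hD, hDne, hDS⟩ := hS.exists_seq
  obtain ⟨X, hX, hXD, b, hb⟩ := exists_monochromatic_FU c hD
  have hXS (i : ℕ) : X i ∈ 𝒮 := FU_subset hS.supClosed hDS (hXD i)
  exact ⟨FU X, FU_subset hS.supClosed hXS,
    isIP_of_seq supClosed_FU hX (fun i => nonempty_of_mem_FU hDne (hXD i)) mem_FU_self,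
    b, fun S hS' => hb S (NU_subset_self supClosed_FU hS')⟩

theorem IsIP.exists_fullMatch_of_subsingleton {β : Type*} [Subsingleton β] (hS : IsIP 𝒮)
    (c : Finset ℕ → β) :
    ∃ ℬ : Finset (Finset ℕ), ↑ℬ ⊆ NU 𝒮 ∧ ∃ 𝒯 ⊆ SMinus 𝒮 ↑ℬ, IsIP 𝒯 ∧
      ∀ T ∈ NU 𝒯, ∃ B ∈ ℬ, Disjoint B T ∧ c T = c B ∧ c T = c (B ∪ T) := by
  obtain ⟨D, hD, hDne, hDS⟩ := hS.exists_seq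
  have h𝒯 : SupClosed (SMinus 𝒮 ↑({D 0} : Finset (Finset ℕ))) := hS.supClosed.sMinus _
  refine ⟨{D 0}, by simpa using mem_NU (hDS 0) (hDne 0), _, subset_rfl, ?_, fun T hT => ?_⟩
  · exact isIP_of_seq h𝒯 (hD.comp_of_injective Nat.succ_injective) (fun i => hDne _)
      fun i => ⟨hDS _, by simpa using hD (Nat.succ_ne_zero i)⟩
  · have hTB : Disjoint T (D 0) := (NU_subset_self h𝒯 hT).2 _ (by simp)
    exact ⟨D 0, Finset.mem_singleton_self _, hTB.symm, Subsingleton.elim _ _,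
      Subsingleton.elim _ _⟩

end IP

/-- The full-matching dichotomy: either some color is avoided on an IP subfamily, or
some finite collection full-matches an IP family. -/
theorem full_match_maybe (r : ℕ) (𝒮 : Set (Finset ℕ)) (hS : IsIP 𝒮)
    (c : Finset ℕ → Fin r) :
    (∃ 𝒮' ⊆ 𝒮, IsIP 𝒮' ∧ ∃ i : Fin r, ∀ S ∈ NU 𝒮', c S ≠ i) ∨
    (∃ ℬ : Finset (Finset ℕ), ↑ℬ ⊆ NU 𝒮 ∧
      ∃ 𝒯 ⊆ SMinus 𝒮 ↑ℬ, IsIP 𝒯 ∧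
        ∀ T ∈ NU 𝒯, ∃ B ∈ ℬ, Disjoint B T ∧ c T = c B ∧ c T = c (B ∪ T)) := by
  rcases le_or_gt r 1 with hr | hr
  · have := Fin.subsingleton_iff_le_one.2 hr
    exact Or.inr (hS.exists_fullMatch_of_subsingleton c)
  · have := Fin.nontrivial_iff_two_le.2 hr
    obtain ⟨𝒮', h𝒮'S, h𝒮', j, hj⟩ := hS.exists_monochromatic c
    obtain ⟨i, hij⟩ := exists_ne j
    exact Or.inl ⟨𝒮', h𝒮'S, h𝒮', i, fun S hS' hSi => hij (hSi.symm.trans (hj S hS'))⟩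
end

section
/- Suppose for every IP family 𝒮 of finite subsets of ℕ and every finite coloring c of NU(𝒮) with r colors, either c is constant on NU(𝒮') for some IP subfamily 𝒮' ⊆ 𝒮, or there exist a finite set ℬ ⊆ NU(𝒮) and an IP family 𝒯 ⊆ 𝒮 − ℬ full-matched by ℬ. Then the Finite Unions Theorem holds: every finite coloring of the nonempty finite subsets of ℕ has a monochromatic IP set. -/
namespace FMaux

theorem mem_NU_of_mem {𝒮 : Set (Finset ℕ)} {S : Finset ℕ} (h : S ∈ 𝒮) (hne : S.Nonempty) :
    S ∈ NU 𝒮 := ⟨hne, {S}, by simpa using h, by simp⟩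

theorem NU_nonempty {𝒮 : Set (Finset ℕ)} {T : Finset ℕ} (h : T ∈ NU 𝒮) : T.Nonempty := h.1

theorem NU_mono {𝒮 𝒯 : Set (Finset ℕ)} (h : 𝒮 ⊆ 𝒯) : NU 𝒮 ⊆ NU 𝒯 := by
  rintro T ⟨hne, F, hF, rfl⟩
  exact ⟨hne, F, hF.trans h, rfl⟩

theorem NU_union {𝒮 : Set (Finset ℕ)} {X Y : Finset ℕ} (hX : X ∈ NU 𝒮) (hY : Y ∈ NU 𝒮) :
    X ∪ Y ∈ NU 𝒮 := by
  obtain ⟨hne, F, hF, rfl⟩ := hX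
  obtain ⟨hne', G, hG, rfl⟩ := hY
  refine ⟨hne.mono Finset.subset_union_left, F ∪ G, ?_, ?_⟩
  · rw [Finset.coe_union]
    exact Set.union_subset hF hG
  · rw [Finset.sup_union]
    rfl

theorem NU_idem {𝒮 : Set (Finset ℕ)} : NU (NU 𝒮) ⊆ NU 𝒮 := by
  rintro T ⟨hne, F, hF, rfl⟩
  have h : ∀ s : {x // x ∈ F}, ∃ G : Finset (Finset ℕ), ↑G ⊆ 𝒮 ∧ (s : Finset ℕ) = G.sup id :=
    fun s => (hF s.2).2
  choose G hG hGs using h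
  refine ⟨hne, F.attach.biUnion G, ?_, ?_⟩
  · intro x hx
    simp only [Finset.coe_biUnion, Set.mem_iUnion] at hx
    obtain ⟨s, _, hxs⟩ := hx
    exact hG s hxs
  · rw [Finset.sup_biUnion]
    have : ∀ s ∈ F.attach, (G s).sup id = id (s : Finset ℕ) := fun s _ => (hGs s).symm
    rw [Finset.sup_congr rfl this, Finset.sup_attach]

theorem exists_mem_NU {𝒮 : Set (Finset ℕ)}
    (h : ∃ 𝒟 ⊆ 𝒮, 𝒟.Infinite ∧ 𝒟.Pairwise Disjoint) : ∃ T, T ∈ NU 𝒮 := by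
  obtain ⟨𝒟, h𝒟, hinf, -⟩ := h
  obtain ⟨D, hD⟩ := (hinf.diff (Set.finite_singleton ∅)).nonempty
  exact ⟨D, mem_NU_of_mem (h𝒟 hD.1) (Finset.nonempty_iff_ne_empty.2 (by simpa using hD.2))⟩

end FMaux

namespace FMaux

variable (b : ℕ → Finset ℕ → Finset ℕ)

/-- The entries `A_k` of the tower of height `n` with seed `T`. -/
def pre : ℕ → Finset ℕ → ℕ → Finset ℕ
  | 0, _, _ => ∅
  | n+1, T, k => if k = n then b n T else pre n (b n T ∪ T) k

/-- The partial unions `U_k` of the tower of height `n` with seed `T`. -/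
def us : ℕ → Finset ℕ → ℕ → Finset ℕ
  | 0, T, _ => T
  | n+1, T, k => if k = n+1 then T else us n (b n T ∪ T) k

theorem us_self : ∀ n T, us b n T n = T
  | 0, _ => rfl
  | _+1, _ => if_pos rfl

theorem us_le {k n : ℕ} (h : k ≤ n) (T : Finset ℕ) :
    us b (n+1) T k = us b n (b n T ∪ T) k := if_neg (by omega)

theorem pre_rel : ∀ n, ∀ k < n, ∀ T,
    pre b n T k = b k (us b n T (k+1)) ∧
      us b n T k = b k (us b n T (k+1)) ∪ us b n T (k+1) := by
  intro n
  induction n with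
  | zero => omega
  | succ n ih =>
    intro k hk T
    rcases Nat.lt_succ_iff_lt_or_eq.1 hk with hk' | rfl
    · have e1 : pre b (n+1) T k = pre b n (b n T ∪ T) k := if_neg (by omega)
      have e2 : us b (n+1) T (k+1) = us b n (b n T ∪ T) (k+1) := us_le b (by omega) T
      have e3 : us b (n+1) T k = us b n (b n T ∪ T) k := us_le b (by omega) T
      rw [e1, e2, e3]
      exact ih k hk' _
    · have e1 : pre b (k+1) T k = b k T := if_pos rfl
      have e2 : us b (k+1) T (k+1) = T := if_pos rfl
      have e3 : us b (k+1) T k = b k T ∪ T := by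
        rw [us_le b le_rfl T, us_self]
      rw [e1, e2, e3]
      exact ⟨rfl, rfl⟩

variable (C : ℕ → Finset ℕ → ℕ) (S : ℕ → Set (Finset ℕ)) (Bs : ℕ → Finset (Finset ℕ))

theorem S_anti (hS : ∀ n, S (n+1) ⊆ S n) : ∀ j k, j ≤ k → S k ⊆ S j := by
  intro j k h
  induction h with
  | refl => exact fun _ hx => hx
  | step _ ih => exact fun x hx => ih (hS _ hx)

section Tower

variable (hS : ∀ n, S (n+1) ⊆ S n)
  (hm : ∀ n, ∀ T ∈ NU (S (n+1)), b n T ∈ Bs n ∧ Disjoint (b n T) T ∧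
      C n (b n T) = C n T ∧ C n T = C n (b n T ∪ T))
  (hB : ∀ n, ↑(Bs n) ⊆ NU (S n))
  (href : ∀ n X Y, C (n+1) X = C (n+1) Y → C n X = C n Y ∧ b n X = b n Y)

include hS hm hB in
theorem us_mem : ∀ n T, T ∈ NU (S n) → ∀ k, k ≤ n → us b n T k ∈ NU (S k) := by
  intro n
  induction n with
  | zero =>
    intro T hT k hk
    obtain rfl : k = 0 := by omega
    exact hT
  | succ n ih =>
    intro T hT k hk
    rcases Nat.le_succ_iff.1 hk with hk' | rfl
    · rw [us_le b hk' T]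
      refine ih (b n T ∪ T) ?_ k hk'
      exact NU_union (hB n ((hm n T hT).1)) (NU_mono (hS n) hT)
    · rw [us_self]; exact hT

include href in
theorem C_proj : ∀ j k, j ≤ k → ∀ X Y, C k X = C k Y → C j X = C j Y := by
  intro j k h
  induction h with
  | refl => exact fun _ _ h => h
  | step _ ih => exact fun X Y hXY => ih X Y (href _ X Y hXY).1

include hS hm hB href in
theorem us_color : ∀ n T, T ∈ NU (S n) → ∀ j k, j ≤ k → k ≤ n →
    C j (us b n T k) = C j (us b n T j) := by
  intro n T hT j k hjk
  induction hjk with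
  | refl => exact fun _ => rfl
  | @step m hjm ih =>
    intro hmn
    have hmn' : m < n := hmn
    have hU : us b n T (m+1) ∈ NU (S (m+1)) := us_mem b C S Bs hS hm hB n T hT (m+1) hmn
    have hrel := (pre_rel b n m hmn' T).2
    have hcol := (hm m _ hU).2.2.2
    rw [← hrel] at hcol
    calc C j (us b n T (m+1)) = C j (us b n T m) :=
            C_proj b C href j m hjm _ _ hcol
      _ = C j (us b n T j) := ih (by omega)

theorem us_subset : ∀ n T, ∀ i k, i ≤ k → k ≤ n → us b n T k ⊆ us b n T i := by
  intro n T i k hik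
  induction hik with
  | refl => exact fun _ => subset_rfl
  | @step m him ih =>
    intro hmn
    have h1 : us b n T m = b m (us b n T (m+1)) ∪ us b n T (m+1) := (pre_rel b n m hmn T).2
    refine subset_trans ?_ (ih (by omega))
    rw [h1]
    exact Finset.subset_union_right

include hS hm hB in
theorem pre_mem : ∀ n T, T ∈ NU (S n) → ∀ k, k < n → pre b n T k ∈ Bs k := by
  intro n T hT k hk
  rw [(pre_rel b n k hk T).1]
  exact (hm k _ (us_mem b C S Bs hS hm hB n T hT (k+1) hk)).1

include hS hm hB in
theorem pre_disj : ∀ n T, T ∈ NU (S n) → ∀ k j, k < j → j < n →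
    Disjoint (pre b n T k) (pre b n T j) := by
  intro n T hT k j hkj hjn
  have hU : us b n T (k+1) ∈ NU (S (k+1)) :=
    us_mem b C S Bs hS hm hB n T hT (k+1) (by omega)
  have hd : Disjoint (b k (us b n T (k+1))) (us b n T (k+1)) := (hm k _ hU).2.1
  rw [(pre_rel b n k (by omega) T).1]
  refine hd.mono_right ?_
  have h1 : pre b n T j ⊆ us b n T j := by
    rw [(pre_rel b n j hjn T).1, (pre_rel b n j hjn T).2]
    exact Finset.subset_union_left
  exact h1.trans (us_subset b n T (k+1) j hkj hjn.le)

include hS hm hB href in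
theorem tower_main : ∀ n T, T ∈ NU (S n) → ∀ K : Finset ℕ, ∀ hK : K.Nonempty,
    (∀ j ∈ K, j < n) →
    C (K.min' hK) (K.sup (pre b n T)) = C (K.min' hK) (us b n T (K.min' hK)) ∧
      K.sup (pre b n T) ∈ NU (S (K.min' hK)) := by
  intro n T hT K
  induction K using Finset.strongInduction with
  | _ K ih =>
  intro hK hKn
  set m := K.min' hK with hmdef
  have hmK : m ∈ K := K.min'_mem hK
  have hmn : m < n := hKn m hmK
  have hUm1 : us b n T (m+1) ∈ NU (S (m+1)) :=
    us_mem b C S Bs hS hm hB n T hT (m+1) hmn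
  have hAm : pre b n T m = b m (us b n T (m+1)) := (pre_rel b n m hmn T).1
  have hUrel : us b n T m = b m (us b n T (m+1)) ∪ us b n T (m+1) := (pre_rel b n m hmn T).2
  rcases (K.erase m).eq_empty_or_nonempty with he | hne
  · have hKm : K = {m} := by
      rcases (Finset.erase_eq_empty_iff K m).1 he with h | h
      · exact absurd h (Finset.nonempty_iff_ne_empty.1 hK)
      · exact h
    rw [hKm, Finset.sup_singleton]
    constructor
    · rw [hAm, (hm m _ hUm1).2.2.1, (hm m _ hUm1).2.2.2, ← hUrel]
    · exact NU_mono (S_anti S hS m m le_rfl) (hB m (pre_mem b C S Bs hS hm hB n T hT m hmn))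
  · set m' := (K.erase m).min' hne with hm'def
    have hm'K : m' ∈ K := Finset.mem_of_mem_erase ((K.erase m).min'_mem hne)
    have hmm' : m < m' := by
      have h1 : m ≤ m' := K.min'_le m' hm'K
      have h2 : m' ≠ m := Finset.ne_of_mem_erase ((K.erase m).min'_mem hne)
      omega
    have hm'n : m' < n := hKn m' hm'K
    obtain ⟨ihc, ihmem⟩ := ih (K.erase m) (Finset.erase_ssubset hmK) hne
      (fun j hj => hKn j (Finset.mem_of_mem_erase hj))
    set V : Finset ℕ := (K.erase m).sup (pre b n T) with hVdef
    have hVmem : V ∈ NU (S (m+1)) :=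
      NU_mono (S_anti S hS (m+1) m' hmm') ihmem
    -- C (m+1) V = C (m+1) (us (m+1))
    have h1 : C (m+1) V = C (m+1) (us b n T m') :=
      C_proj b C href (m+1) m' hmm' _ _ ihc
    have h2 : C (m+1) (us b n T m') = C (m+1) (us b n T (m+1)) :=
      us_color b C S Bs hS hm hB href n T hT (m+1) m' hmm' hm'n.le
    have h3 : b m V = b m (us b n T (m+1)) := (href m _ _ (h1.trans h2)).2
    have hmV := hm m V hVmem
    have hsup : K.sup (pre b n T) = b m V ∪ V := by
      conv_lhs => rw [← Finset.insert_erase hmK]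
      rw [Finset.sup_insert, hAm, h3]
      rfl
    constructor
    · rw [hsup, ← hmV.2.2.2, (href m _ _ (h1.trans h2)).1, hUrel, ← (hm m _ hUm1).2.2.2]
    · rw [hsup]
      exact NU_union (hB m hmV.1) (NU_mono (S_anti S hS m (m+1) (by omega)) hVmem)

end Tower

end FMaux

/-- A stage of the iteration: an IP family together with a refined coloring. -/
structure FMaux.Stage (r : ℕ) (c : Finset ℕ → Fin r) where
  S : Set (Finset ℕ)
  r' : ℕ
  c' : Finset ℕ → Fin r'
  hIP : IsIP S
  ref : ∀ X Y, c' X = c' Y → c X = c Y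

/-- The full-matching lemma implies the Finite Unions Theorem. -/
theorem full_match_implies_finite_unions
    (hFM : ∀ (r : ℕ) (𝒮 : Set (Finset ℕ)), IsIP 𝒮 → ∀ c : Finset ℕ → Fin r,
      (∃ 𝒮' ⊆ 𝒮, IsIP 𝒮' ∧ ∃ i : Fin r, ∀ S ∈ NU 𝒮', c S = i) ∨
      (∃ ℬ : Finset (Finset ℕ), ↑ℬ ⊆ NU 𝒮 ∧
        ∃ 𝒯 ⊆ SMinus 𝒮 ↑ℬ, IsIP 𝒯 ∧
          ∀ T ∈ NU 𝒯, ∃ B ∈ ℬ, Disjoint B T ∧ c B = c T ∧ c T = c (B ∪ T))) :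
    ∀ (r : ℕ) (c : Finset ℕ → Fin r),
      ∃ (i : Fin r) (𝒮 : Set (Finset ℕ)), IsIP 𝒮 ∧ ∀ S ∈ NU 𝒮, c S = i := by
  intro r c
  by_contra hno
  -- Step lemma: every stage has a successor stage.
  have step : ∀ s : FMaux.Stage r c, ∃ t : FMaux.Stage r c, ∃ ℬ : Finset (Finset ℕ),
      ∃ b : Finset ℕ → Finset ℕ,
      t.S ⊆ s.S ∧ ↑ℬ ⊆ NU s.S ∧
      (∀ T ∈ NU t.S, b T ∈ ℬ ∧ Disjoint (b T) T ∧
        (s.c' (b T)).val = (s.c' T).val ∧ (s.c' T).val = (s.c' (b T ∪ T)).val) ∧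
      (∀ X Y : Finset ℕ, (t.c' X).val = (t.c' Y).val →
        (s.c' X).val = (s.c' Y).val ∧ b X = b Y) := by
    intro s
    rcases hFM s.r' s.S s.hIP s.c' with ⟨S', hsub, hIP', i, hi⟩ | ⟨ℬ, hℬ, 𝒯, h𝒯, hIP𝒯, hmt⟩
    · exfalso
      obtain ⟨D, hD⟩ := FMaux.exists_mem_NU hIP'.2
      exact hno ⟨c D, S', hIP', fun T hT => s.ref T D (by rw [hi T hT, hi D hD])⟩
    · classical
      set b : Finset ℕ → Finset ℕ := fun T =>
        if h : ∃ B ∈ ℬ, Disjoint B T ∧ s.c' B = s.c' T ∧ s.c' T = s.c' (B ∪ T)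
        then h.choose else ∅ with hbdef
      have hbmem : ∀ T, b T ∈ insert ∅ ℬ := by
        intro T
        rw [hbdef]
        dsimp only
        split
        · next h => exact Finset.mem_insert_of_mem h.choose_spec.1
        · exact Finset.mem_insert_self _ _
      set c'' : Finset ℕ → Fin ((insert ∅ ℬ).card * s.r') := fun T =>
        finProdFinEquiv ((insert ∅ ℬ).equivFin ⟨b T, hbmem T⟩, s.c' T) with hc''def
      have hinj : ∀ X Y, c'' X = c'' Y → b X = b Y ∧ s.c' X = s.c' Y := by
        intro X Y h
        have hp := finProdFinEquiv.injective h
        refine ⟨?_, congrArg Prod.snd hp⟩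
        have h1 := (insert ∅ ℬ).equivFin.injective (congrArg Prod.fst hp)
        exact congrArg Subtype.val h1
      refine ⟨⟨𝒯, _, c'', hIP𝒯, fun X Y h => s.ref X Y (hinj X Y h).2⟩, ℬ, b, ?_, hℬ, ?_, ?_⟩
      · exact fun T hT => (h𝒯 hT).1
      · intro T hT
        have hex : ∃ B ∈ ℬ, Disjoint B T ∧ s.c' B = s.c' T ∧ s.c' T = s.c' (B ∪ T) := hmt T hT
        have hb : b T = hex.choose := by rw [hbdef]; exact dif_pos hex
        obtain ⟨h1, h2, h3, h4⟩ := hex.choose_spec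
        rw [hb]
        exact ⟨h1, h2, congrArg Fin.val h3, congrArg Fin.val h4⟩
      · intro X Y h
        have h' : c'' X = c'' Y := Fin.val_injective h
        exact ⟨congrArg Fin.val (hinj X Y h').2, (hinj X Y h').1⟩
  -- base stage
  have hbase : IsIP (Set.univ : Set (Finset ℕ)) := by
    refine ⟨fun _ _ _ _ => Set.mem_univ _, Set.range (fun n : ℕ => ({n} : Finset ℕ)),
      Set.subset_univ _, Set.infinite_range_of_injective Finset.singleton_injective, ?_⟩
    rintro _ ⟨a, rfl⟩ _ ⟨a', rfl⟩ hne
    exact Finset.disjoint_singleton.2 (fun h => hne (by rw [h]))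
  let base : FMaux.Stage r c := ⟨Set.univ, r, c, hbase, fun _ _ h => h⟩
  choose nxt Bf bf hsub hBsub hmt href using step
  let f : ℕ → FMaux.Stage r c := fun n => Nat.rec base (fun _ s => nxt s) n
  let Sn : ℕ → Set (Finset ℕ) := fun n => (f n).S
  let Cn : ℕ → Finset ℕ → ℕ := fun n X => ((f n).c' X).val
  let bn : ℕ → Finset ℕ → Finset ℕ := fun n => bf (f n)
  let Bn : ℕ → Finset (Finset ℕ) := fun n => Bf (f n)
  have hS' : ∀ n, Sn (n+1) ⊆ Sn n := fun n => hsub (f n)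
  have hm' : ∀ n, ∀ T ∈ NU (Sn (n+1)), bn n T ∈ Bn n ∧ Disjoint (bn n T) T ∧
      Cn n (bn n T) = Cn n T ∧ Cn n T = Cn n (bn n T ∪ T) := fun n => hmt (f n)
  have hB' : ∀ n, ↑(Bn n) ⊆ NU (Sn n) := fun n => hBsub (f n)
  have href' : ∀ n X Y, Cn (n+1) X = Cn (n+1) Y → Cn n X = Cn n Y ∧ bn n X = bn n Y :=
    fun n => href (f n)
  -- seeds for towers of every height
  have hseeds : ∀ n, ∃ T, T ∈ NU (Sn n) := fun n => FMaux.exists_mem_NU (f n).hIP.2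
  choose seed hseed using hseeds
  let g : ℕ → ℕ → Finset ℕ := fun n => FMaux.pre bn n (seed n)
  -- a free ultrafilter
  obtain ⟨U, hU⟩ := Ultrafilter.exists_le (Filter.cofinite : Filter ℕ)
  have hcof : ∀ k : ℕ, {n | k < n} ∈ U := by
    intro k
    apply hU
    have : {n : ℕ | k < n}ᶜ.Finite := by
      apply Set.Finite.subset (Set.finite_Iic k)
      intro n hn
      simpa using hn
    exact this
  have hgmem : ∀ k n, k < n → g n k ∈ Bn k := fun k n h =>
    FMaux.pre_mem bn Cn Sn Bn hS' hm' hB' n (seed n) (hseed n) k h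
  -- choose the branch through the finitely-branching tree, using the ultrafilter
  have hAex : ∀ k, ∃ q ∈ Bn k, {n | k < n ∧ g n k = q} ∈ U := by
    intro k
    by_contra hq
    push_neg at hq
    have hint : (⋂ q ∈ (Bn k : Set (Finset ℕ)), {n | k < n ∧ g n k = q}ᶜ) ∈ U :=
      (Filter.biInter_mem (Bn k).finite_toSet).2 fun q hqk =>
        Ultrafilter.compl_mem_iff_notMem.2 (hq q hqk)
    obtain ⟨n, hn⟩ := Ultrafilter.nonempty_of_mem (Filter.inter_mem (hcof k) hint)
    have hk : k < n := hn.1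
    have hmemB := hgmem k n hk
    have := Set.mem_iInter₂.1 hn.2 (g n k) hmemB
    exact this ⟨hk, rfl⟩
  choose A hABn hAU using hAex
  have key : ∀ k, ∃ n, k < n ∧ ∀ j ≤ k, g n j = A j := by
    intro k
    have h1 : (⋂ j ∈ (Finset.range (k+1) : Set ℕ), {n | j < n ∧ g n j = A j}) ∈ U :=
      (Filter.biInter_mem (Finset.range (k+1)).finite_toSet).2 fun j _ => hAU j
    obtain ⟨n, hn⟩ := Ultrafilter.nonempty_of_mem h1
    have hmem : ∀ j ≤ k, j < n ∧ g n j = A j := fun j hj =>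
      Set.mem_iInter₂.1 hn j (by simpa using Nat.lt_succ_of_le hj)
    exact ⟨n, (hmem k le_rfl).1, fun j hj => (hmem j hj).2⟩
  -- properties of the branch
  have hAne : ∀ k, (A k).Nonempty := fun k => FMaux.NU_nonempty (hB' k (hABn k))
  have hAdis : ∀ j k, j < k → Disjoint (A j) (A k) := by
    intro j k hjk
    obtain ⟨n, hkn, hag⟩ := key k
    have := FMaux.pre_disj bn Cn Sn Bn hS' hm' hB' n (seed n) (hseed n) j k hjk hkn
    rwa [show FMaux.pre bn n (seed n) j = A j from hag j (by omega),
      show FMaux.pre bn n (seed n) k = A k from hag k le_rfl] at this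
  have hApair : ∀ j k, j ≠ k → Disjoint (A j) (A k) := by
    intro j k h
    rcases h.lt_or_gt with h' | h'
    · exact hAdis j k h'
    · exact (hAdis k j h').symm
  have hAinj : Function.Injective A := by
    intro j k h
    by_contra hne
    have hd := hApair j k hne
    rw [h] at hd
    exact (hAne k).ne_empty ((Finset.disjoint_self_iff_empty _).1 hd)
  refine hno ⟨c (A 0), NU (Set.range A), ⟨?_, Set.range A, ?_, ?_, ?_⟩, ?_⟩
  · exact fun X hX Y hY => FMaux.NU_union hX hY
  · rintro _ ⟨k, rfl⟩
    exact FMaux.mem_NU_of_mem (Set.mem_range_self k) (hAne k)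
  · exact Set.infinite_range_of_injective hAinj
  · rintro _ ⟨j, rfl⟩ _ ⟨k, rfl⟩ hne
    exact hApair j k (fun h => hne (by rw [h]))
  -- monochromaticity
  intro X hX
  obtain ⟨hXne, F, hF, rfl⟩ := FMaux.NU_idem hX
  have hFex : ∀ s : {x // x ∈ F}, ∃ k, A k = (s : Finset ℕ) := fun s => hF s.2
  choose idx hidx using hFex
  classical
  set K : Finset ℕ := F.attach.image idx with hKdef
  have hFne : F.Nonempty := by
    by_contra hFe
    rw [Finset.not_nonempty_iff_eq_empty.1 hFe] at hXne
    simp at hXne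
  have hKne : K.Nonempty := (hFne.attach).image idx
  have hsupA : K.sup A = F.sup id := by
    rw [hKdef, Finset.sup_image]
    calc F.attach.sup (A ∘ idx) = F.attach.sup (fun s => (s : Finset ℕ)) :=
          Finset.sup_congr rfl (fun s _ => hidx s)
      _ = F.sup id := Finset.sup_attach F id
  obtain ⟨n, hMn, hag⟩ := key (K.max' hKne)
  have hKlt : ∀ j ∈ K, j < n := fun j hj => lt_of_le_of_lt (K.le_max' j hj) hMn
  have hsupg : K.sup A = K.sup (g n) :=
    Finset.sup_congr rfl (fun j hj => (hag j (K.le_max' j hj)).symm)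
  obtain ⟨hc1, -⟩ :=
    FMaux.tower_main bn Cn Sn Bn hS' hm' hB' href' n (seed n) (hseed n) K hKne hKlt
  have h2 : Cn 0 (K.sup (g n)) = Cn 0 (FMaux.us bn n (seed n) (K.min' hKne)) :=
    FMaux.C_proj bn Cn href' 0 (K.min' hKne) (Nat.zero_le _) _ _ hc1
  have h3 : Cn 0 (FMaux.us bn n (seed n) (K.min' hKne)) = Cn 0 (FMaux.us bn n (seed n) 0) :=
    FMaux.us_color bn Cn Sn Bn hS' hm' hB' href' n (seed n) (hseed n) 0 (K.min' hKne)
      (Nat.zero_le _) (hKlt _ (K.min'_mem hKne)).le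
  have h0n : 0 < n := lt_of_le_of_lt (Nat.zero_le _) hMn
  have hU1 : FMaux.us bn n (seed n) 1 ∈ NU (Sn 1) :=
    FMaux.us_mem bn Cn Sn Bn hS' hm' hB' n (seed n) (hseed n) 1 h0n
  have h4 : Cn 0 (g n 0) = Cn 0 (FMaux.us bn n (seed n) 0) := by
    show Cn 0 (FMaux.pre bn n (seed n) 0) = _
    rw [(FMaux.pre_rel bn n 0 h0n (seed n)).1, (FMaux.pre_rel bn n 0 h0n (seed n)).2]
    exact ((hm' 0 _ hU1).2.2.1).trans ((hm' 0 _ hU1).2.2.2)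
  have h5 : g n 0 = A 0 := hag 0 (Nat.zero_le _)
  have hfinal : Cn 0 (F.sup id) = Cn 0 (A 0) := by
    rw [← hsupA, hsupg, h2, h3, ← h4, h5]
  exact Fin.val_injective hfinal
end

section
/- There exists a computable 2-coloring c of the nonempty finite subsets of ℕ such that for every computably enumerable family 𝒲 of finite subsets of ℕ containing infinitely many pairwise disjoint elements, the coloring c is not constant on NU(𝒲), the set of nonempty unions of finitely many members of 𝒲. -/
/-- `𝒲` is computably enumerable (Σ⁰₁). -/
def CEFam (𝒲 : Set (Finset ℕ)) : Prop :=
  ∃ R : ℕ → Finset ℕ → Bool, Computable₂ R ∧ 𝒲 = {Z | ∃ x, R x Z = true}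

/-!
Code a finite set `B` by `binCode B = ∑ i ∈ B, 2 ^ i`. Then "`A` end-extends `B`" becomes the
arithmetic condition `EndExtends (binCode A) (binCode B)`, and `B ∪ D` end-extends a nonempty `B`
whenever `D` is nonempty and lies beyond `binCode B`.

Requirement `e` attends to the `e`-th c.e. family `W_e`. In a finite-injury construction it may
claim a member of `W_e` all of whose elements exceed the codes claimed by requirements of higher
priority, and a new claim cancels the claims of lower priority. A set `A` gets the negation of the
colour of the claimed set that it end-extends at stage `binCode A` (and `false` if there is none);
the separation between claims makes this claimed set unique.

If `W_e` contains infinitely many pairwise disjoint sets, requirement `e` eventually holds a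
permanent claim `B ∈ W_e`. For a member `D` of `W_e` lying far beyond `B`, the union `B ∪ D`
end-extends `B` at a stage where the claim is present, so `B` and `B ∪ D` get different colours
although both lie in `NU W_e`.
-/

open Denumerable Encodable Nat.Partrec.Code
open Nat.Partrec (Code)

theorem Set.Infinite.exists_mem_nonempty_forall_lt {α : Type*} [LinearOrder α]
    [LocallyFiniteOrderBot α] {𝒟 : Set (Finset α)} (hinf : 𝒟.Infinite)
    (hdisj : 𝒟.Pairwise Disjoint) (r : α) : ∃ D ∈ 𝒟, D.Nonempty ∧ ∀ i ∈ D, r < i := by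
  have hmeet : {D ∈ 𝒟 | ∃ i ≤ r, i ∈ D}.Finite := by
    refine ((Set.finite_Iic r).biUnion fun i _ =>
      Set.Subsingleton.finite (s := {D ∈ 𝒟 | i ∈ D}) ?_).subset ?_
    · rintro D ⟨hD, hiD⟩ D' ⟨hD', hiD'⟩
      by_contra hne
      exact Finset.disjoint_left.1 (hdisj hD hD' hne) hiD hiD'
    · rintro D ⟨hD, i, hir, hiD⟩
      exact Set.mem_biUnion (Set.mem_Iic.2 hir) ⟨hD, hiD⟩
  obtain ⟨D, hD, hDbad⟩ := (hinf.sdiff (hmeet.insert ∅)).nonempty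
  simp only [Set.mem_insert_iff, Set.mem_ofPred_eq, not_or, not_exists, not_and] at hDbad
  exact ⟨D, hD, Finset.nonempty_iff_ne_empty.2 hDbad.1, fun i hi => by
    by_contra! h; exact hDbad.2 hD i h hi⟩

lemma union_mem_NU {𝒮 : Set (Finset ℕ)} {B D : Finset ℕ} (hB : B ∈ 𝒮) (hD : D ∈ 𝒮)
    (hne : (B ∪ D).Nonempty) : B ∪ D ∈ NU 𝒮 :=
  ⟨hne, {B, D}, by simp [Set.insert_subset_iff, hB, hD], by simp⟩

section PrimrecLemmas

open Primrec

variable {α β : Type*} [Primcodable α] [Primcodable β]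

theorem Primrec.list_find? {f : α → List β} {p : α → β → Bool} (hf : Primrec f)
    (hp : Primrec₂ p) : Primrec fun a => (f a).find? (p a) := by
  have hR : PrimrecRel fun b a => p a b = true :=
    Primrec₂.primrecRel (hp.swap.of_eq fun _ _ => by simp)
  exact (list_head?.comp (hR.listFilter.comp hf Primrec.id)).of_eq fun a => by
    simp [List.head?_filter]

theorem Primrec.nat_pow : Primrec₂ ((· ^ ·) : ℕ → ℕ → ℕ) :=
  Primrec₂.unpaired'.1 Nat.Primrec.pow

theorem Primrec.nat_dvd : PrimrecRel ((· ∣ ·) : ℕ → ℕ → Prop) :=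
  (Primrec.eq.comp (nat_mod.comp snd fst) (const 0)).of_eq fun _ => Nat.dvd_iff_mod_eq_zero.symm

end PrimrecLemmas

namespace PriorityColoring

def binCode (B : Finset ℕ) : ℕ := ∑ i ∈ B, 2 ^ i

lemma binCode_injective : Function.Injective binCode :=
  Finset.geomSum_injective le_rfl

lemma lt_binCode_of_mem {B : Finset ℕ} {i : ℕ} (hi : i ∈ B) : i < binCode B :=
  Finset.lt_geomSum_of_mem le_rfl hi

lemma binCode_ne_zero {B : Finset ℕ} (hB : B.Nonempty) : binCode B ≠ 0 :=
  (Nat.zero_lt_of_lt (lt_binCode_of_mem hB.choose_spec)).ne'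

lemma two_pow_dvd_binCode {B : Finset ℕ} {k : ℕ} (h : ∀ i ∈ B, k ≤ i) : 2 ^ k ∣ binCode B :=
  Finset.dvd_sum fun i hi => pow_dvd_pow 2 (h i hi)

lemma binCode_union {B D : Finset ℕ} (h : Disjoint B D) :
    binCode (B ∪ D) = binCode B + binCode D :=
  Finset.sum_union h

/-- For the sets `A` and `B` with binary codes `a` and `b`: `B` is nonempty, `B ≠ A` and
`A ∩ [0, b] = B`. -/
def EndExtends (a b : ℕ) : Prop := b ≠ 0 ∧ b < a ∧ a % 2 ^ (b + 1) = b

instance : DecidableRel EndExtends := fun _ _ => by unfold EndExtends; infer_instance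

lemma endExtends_binCode_union {B D : Finset ℕ} (hB : B.Nonempty) (hD : D.Nonempty)
    (hBD : ∀ i ∈ D, binCode B < i) : EndExtends (binCode (B ∪ D)) (binCode B) := by
  have hdisj : Disjoint B D := Finset.disjoint_left.2 fun i hiB hiD =>
    (lt_binCode_of_mem hiB).not_gt (hBD i hiD)
  obtain ⟨k, hk⟩ := two_pow_dvd_binCode (B := D) (k := binCode B + 1) fun i hi => hBD i hi
  have hD0 := binCode_ne_zero hD
  have hlt : binCode B + 1 < 2 ^ (binCode B + 1) := Nat.lt_two_pow_self
  refine ⟨binCode_ne_zero hB, by rw [binCode_union hdisj]; omega, ?_⟩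
  rw [binCode_union hdisj, hk, Nat.add_mul_mod_self_left, Nat.mod_eq_of_lt (by omega)]

lemma not_endExtends_of_dvd {a b q : ℕ} (hb : EndExtends a b) (hq : q ≠ 0)
    (hdvd : 2 ^ (q + 1) ∣ b) : ¬ EndExtends a q := by
  rintro ⟨-, -, haq⟩
  have hqb : q < b := by
    have := Nat.le_of_dvd (Nat.pos_of_ne_zero hb.1) hdvd
    have : q + 1 < 2 ^ (q + 1) := Nat.lt_two_pow_self
    omega
  rw [← Nat.mod_mod_of_dvd a (pow_dvd_pow 2 (by omega : q + 1 ≤ b + 1)), hb.2.2,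
    Nat.mod_eq_zero_of_dvd hdvd] at haq
  exact hq haq.symm

/-- Requirement `e` attends to the sets whose binary codes lie in the domain of the `e`-th partial
recursive function; `halts e s` is the stage-`s` approximation of that domain. -/
def halts (e s n : ℕ) : Bool := (evaln s (ofNat Code e) n).isSome

lemma halts_mono {e s s' n : ℕ} (h : s ≤ s') (hs : halts e s n) : halts e s' n := by
  obtain ⟨y, hy⟩ := Option.isSome_iff_exists.1 hs
  exact Option.isSome_iff_exists.2 ⟨y, evaln_mono h hy⟩

lemma exists_halts_iff (c : Code) (n : ℕ) : (∃ s, halts (encode c) s n) ↔ (eval c n).Dom := by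
  simp only [halts, ofNat_encode, Option.isSome_iff_exists, Part.dom_iff_mem, evaln_complete]
  exact exists_comm

/-- `(e, b)` records that requirement `e` claims the set with binary code `b`. -/
abbrev Claims := List (ℕ × ℕ)

/-- `2 ^ (q.2 + 1) ∣ b` says that all elements of the set coded by `b` exceed the code `q.2`. -/
def Admissible (s : ℕ) (K : Claims) (e b : ℕ) : Prop :=
  b ≠ 0 ∧ (∀ q ∈ K, q.1 < e → 2 ^ (q.2 + 1) ∣ b) ∧ halts e s b

instance (s : ℕ) (K : Claims) (e : ℕ) : DecidablePred (Admissible s K e) :=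
  fun _ => by unfold Admissible; infer_instance

def witness (s : ℕ) (K : Claims) (e : ℕ) : Option ℕ :=
  (List.range s).find? (Admissible s K e ·)

def RequiresAttention (s : ℕ) (K : Claims) (e : ℕ) : Prop :=
  (∀ q ∈ K, q.1 ≠ e) ∧ (witness s K e).isSome

instance (s : ℕ) (K : Claims) : DecidablePred (RequiresAttention s K) :=
  fun _ => by unfold RequiresAttention; infer_instance

def actor (s : ℕ) (K : Claims) : Option ℕ :=
  (List.range (s + 1)).find? (RequiresAttention s K ·)

def step (s : ℕ) (K : Claims) : Claims :=
  match actor s K with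
  | some e => K.filter (·.1 < e) ++ [(e, (witness s K e).getD 0)]
  | none => K

def claims : ℕ → Claims
  | 0 => []
  | s + 1 => step s (claims s)

def Acts (s e : ℕ) : Prop := actor s (claims s) = some e

lemma requiresAttention_of_actor_eq_some {s : ℕ} {K : Claims} {e : ℕ}
    (h : actor s K = some e) : RequiresAttention s K e := by
  simpa using (List.find?_range_eq_some.1 h).1

lemma exists_actor_le {s : ℕ} {K : Claims} {e : ℕ} (he : e ≤ s) (h : RequiresAttention s K e) :
    ∃ f ≤ e, actor s K = some f := by
  cases hact : actor s K with
  | none =>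
    have := List.find?_range_eq_none.1 hact e (by omega)
    simp_all
  | some f =>
    refine ⟨f, ?_, rfl⟩
    by_contra! hef
    have := (List.find?_range_eq_some.1 hact).2.2 e hef
    simp_all

lemma step_of_actor_eq_some {s : ℕ} {K : Claims} {e : ℕ} (h : actor s K = some e) :
    ∃ b, Admissible s K e b ∧ step s K = K.filter (·.1 < e) ++ [(e, b)] := by
  obtain ⟨-, hw⟩ := requiresAttention_of_actor_eq_some h
  obtain ⟨b, hb⟩ := Option.isSome_iff_exists.1 hw
  refine ⟨b, by simpa using (List.find?_range_eq_some.1 hb).1, ?_⟩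
  simp [step, h, hb]

lemma filter_step {s : ℕ} {K : Claims} {e : ℕ} (h : ∀ f, actor s K = some f → e ≤ f) :
    (step s K).filter (·.1 < e) = K.filter (·.1 < e) := by
  cases hact : actor s K with
  | none => simp [step, hact]
  | some f =>
    obtain ⟨b, -, hstep⟩ := step_of_actor_eq_some hact
    have hef := h f hact
    rw [hstep, List.filter_append, List.filter_filter]
    simp only [show ¬f < e by omega, decide_false, List.filter_cons_of_neg, List.filter_nil,
      List.append_nil, Bool.false_eq_true, not_false_eq_true]
    exact List.filter_congr fun p _ => by grind

lemma filter_claims {s u e : ℕ} (hsu : s ≤ u) (h : ∀ v f, s ≤ v → v < u → Acts v f → e ≤ f) :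
    (claims u).filter (·.1 < e) = (claims s).filter (·.1 < e) := by
  induction u, hsu using Nat.le_induction with
  | base => rfl
  | succ u hsu ih =>
    rw [claims, filter_step fun f hf => h u f hsu (by omega) hf,
      ih fun v f hv hvu => h v f hv (by omega)]

lemma mem_claims_of_le {s u : ℕ} {p : ℕ × ℕ} (hp : p ∈ claims s) (hsu : s ≤ u)
    (h : ∀ v f, s ≤ v → v < u → Acts v f → p.1 ≤ f) : p ∈ claims u := by
  induction u, hsu using Nat.le_induction with
  | base => exact hp
  | succ u hsu ih =>
    have hpu := ih fun v f hv hvu => h v f hv (by omega)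
    have hlt : ∀ f, Acts u f → p.1 + 1 ≤ f := fun f hf => by
      have hne : f ≠ p.1 := fun hfp => (requiresAttention_of_actor_eq_some hf).1 p hpu hfp.symm
      have := h u f hsu (by omega) hf
      omega
    have hmem : p ∈ (claims u).filter (·.1 < p.1 + 1) := by simp [hpu]
    rw [← filter_step hlt] at hmem
    exact List.mem_of_mem_filter hmem

def WellFormed (K : Claims) : Prop :=
  (K.map Prod.fst).Nodup ∧ ∀ p ∈ K, p.2 ≠ 0 ∧ (∃ t, halts p.1 t p.2) ∧
    ∀ q ∈ K, q.1 < p.1 → 2 ^ (q.2 + 1) ∣ p.2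

lemma WellFormed.step {s : ℕ} {K : Claims} (hK : WellFormed K) : WellFormed (step s K) := by
  cases hact : actor s K with
  | none => simpa [PriorityColoring.step, hact] using hK
  | some e =>
    obtain ⟨b, ⟨hb0, hbdvd, hbhalts⟩, hstep⟩ := step_of_actor_eq_some hact
    have hfree := (requiresAttention_of_actor_eq_some hact).1
    rw [hstep]
    refine ⟨?_, ?_⟩
    · rw [List.map_append, List.nodup_append]
      refine ⟨hK.1.sublist (List.filter_sublist.map _), by simp, ?_⟩
      simp only [List.map_singleton, List.mem_singleton, List.mem_map, List.mem_filter]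
      rintro _ ⟨q, ⟨hq, -⟩, rfl⟩ _ rfl h
      exact hfree q hq h
    · simp only [List.mem_append, List.mem_filter, List.mem_singleton, decide_eq_true_eq]
      rintro p (⟨hp, hpe⟩ | rfl)
      · refine ⟨(hK.2 p hp).1, (hK.2 p hp).2.1, ?_⟩
        rintro q (⟨hq, -⟩ | rfl) hqp
        · exact (hK.2 p hp).2.2 q hq hqp
        · dsimp only at hqp; omega
      · refine ⟨hb0, ⟨s, hbhalts⟩, ?_⟩
        rintro q (⟨hq, -⟩ | rfl) hqp
        · exact hbdvd q hq hqp
        · simp at hqp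

lemma wellFormed_claims (s : ℕ) : WellFormed (claims s) := by
  induction s with
  | zero => simp [WellFormed, claims]
  | succ s ih => exact ih.step

lemma mem_claims_succ_of_acts {s e : ℕ} (h : Acts s e) : ∃ b, (e, b) ∈ claims (s + 1) := by
  obtain ⟨b, -, hstep⟩ := step_of_actor_eq_some h
  exact ⟨b, by simp [claims, hstep]⟩

lemma not_acts_of_acts {s u e : ℕ} (hs : Acts s e) (hsu : s < u)
    (h : ∀ v f, s < v → v < u → Acts v f → e ≤ f) : ¬ Acts u e := fun hu => by
  obtain ⟨b, hb⟩ := mem_claims_succ_of_acts hs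
  have hbu := mem_claims_of_le hb hsu fun v f hv hvu => h v f (by omega) hvu
  exact (requiresAttention_of_actor_eq_some hu).1 _ hbu rfl

lemma finite_setOf_acts (e : ℕ) : {s | Acts s e}.Finite := by
  induction e using Nat.strong_induction_on with
  | _ e ih =>
  obtain ⟨M, hM⟩ := (Set.finite_Iio e |>.biUnion fun f hf => ih f hf).bddAbove
  have hge : ∀ v f, M < v → Acts v f → e ≤ f := fun v f hv hf => by
    by_contra! hfe
    exact absurd (hM (Set.mem_biUnion hfe hf)) (by omega)
  -- after stage `M` a claim of `e` is never cancelled, so `e` acts at most once more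
  by_contra hinf
  obtain ⟨s, hs, hMs⟩ := Set.Infinite.exists_gt hinf M
  obtain ⟨u, hu, hsu⟩ := Set.Infinite.exists_gt hinf s
  exact not_acts_of_acts hs hsu (fun v f hv _ => hge v f (by omega)) hu

lemma exists_forall_mem_claims {e : ℕ}
    (hsupply : ∀ r, ∃ b, b ≠ 0 ∧ 2 ^ r ∣ b ∧ ∃ t, ∀ s ≥ t, halts e s b) :
    ∃ s₀ b, ∀ s ≥ s₀, (e, b) ∈ claims s := by
  obtain ⟨M, hM⟩ := ((Set.finite_Iic e).biUnion fun f _ => finite_setOf_acts f).bddAbove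
  have hgt : ∀ v f, M < v → Acts v f → e < f := fun v f hv hf => by
    by_contra! hfe
    exact absurd (hM (Set.mem_biUnion (Set.mem_Iic.2 hfe) hf)) (by omega)
  by_cases hclaim : ∃ b, (e, b) ∈ claims (M + 1)
  · obtain ⟨b, hb⟩ := hclaim
    exact ⟨M + 1, b, fun s hs =>
      mem_claims_of_le hb hs fun v f hv _ hf => (hgt v f (by omega) hf).le⟩
  push Not at hclaim
  -- otherwise `e` finds a fresh witness and acts, although no `f ≤ e` acts after stage `M`
  obtain ⟨b, hb0, hbdvd, t, ht⟩ := hsupply ((claims (M + 1)).map (·.2 + 1)).sum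
  set s := max (M + 1) (max t (max (b + 1) e))
  have hmem : ∀ q ∈ claims s, q.1 ≤ e → q ∈ claims (M + 1) := fun q hq hqe => by
    have hq' : q ∈ (claims s).filter (·.1 < e + 1) := by
      simpa [List.mem_filter, hq] using Nat.lt_succ_of_le hqe
    rw [filter_claims (s := M + 1) (u := s) (by omega)
      fun v f hv _ hf => hgt v f (by omega) hf] at hq'
    exact List.mem_of_mem_filter hq'
  have hadm : Admissible s (claims s) e b := by
    refine ⟨hb0, fun q hq hqe => (pow_dvd_pow 2 ?_).trans hbdvd, ht s (by omega)⟩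
    exact List.le_sum_of_mem (List.mem_map_of_mem (hmem q hq hqe.le))
  have hattn : RequiresAttention s (claims s) e := by
    refine ⟨fun q hq hqe => hclaim q.2 (hqe ▸ hmem q hq hqe.le), ?_⟩
    rw [witness, List.find?_isSome]
    exact ⟨b, List.mem_range.2 (by omega), by simpa using hadm⟩
  obtain ⟨f, hfe, hf⟩ := exists_actor_le (by omega) hattn
  exact absurd (hgt s f (by omega) hf) (by omega)

lemma eq_of_endExtends {K : Claims} (hK : WellFormed K) {a : ℕ} {p q : ℕ × ℕ} (hp : p ∈ K)
    (hq : q ∈ K) (hpa : EndExtends a p.2) (hqa : EndExtends a q.2) : p = q := by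
  rcases lt_trichotomy q.1 p.1 with h | h | h
  · exact absurd hqa (not_endExtends_of_dvd hpa (hK.2 q hq).1 ((hK.2 p hp).2.2 q hq h))
  · exact List.inj_on_of_nodup_map hK.1 hp hq h.symm
  · exact absurd hpa (not_endExtends_of_dvd hqa (hK.2 p hp).1 ((hK.2 q hq).2.2 p hp h))

def extendedClaim (a : ℕ) : Option ℕ := ((claims a).find? (EndExtends a ·.2)).map Prod.snd

lemma extendedClaim_eq_some {a : ℕ} {p : ℕ × ℕ} (hp : p ∈ claims a) (hpa : EndExtends a p.2) :
    extendedClaim a = some p.2 := by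
  obtain ⟨q, hq⟩ := Option.isSome_iff_exists.1
    (List.find?_isSome (p := fun x => decide (EndExtends a x.2)) |>.2 ⟨p, hp, by simpa using hpa⟩)
  have hqa : EndExtends a q.2 := by simpa using List.find?_some hq
  rw [extendedClaim, hq,
    eq_of_endExtends (wellFormed_claims a) hp (List.mem_of_find?_eq_some hq) hpa hqa]
  rfl

lemma lt_of_extendedClaim_eq_some {a b : ℕ} (h : extendedClaim a = some b) : b < a := by
  obtain ⟨p, hp, rfl⟩ := Option.map_eq_some_iff.1 h
  exact (of_decide_eq_true
    (List.find?_some (p := fun x : ℕ × ℕ => decide (EndExtends a x.2)) hp)).2.1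

def colorCode (a : ℕ) : Bool :=
  match h : extendedClaim a with
  | some b =>
    have := lt_of_extendedClaim_eq_some h
    !colorCode b
  | none => false
termination_by a

lemma colorCode_eq (a : ℕ) : colorCode a = (extendedClaim a).elim false fun b => !colorCode b := by
  rw [colorCode]; split <;> simp_all

def coloring (A : Finset ℕ) : Bool := colorCode (binCode A)

section Computability

open Primrec

/-- Mathlib encodes a finset by the gaps between its consecutive elements (`Denumerable.lower'`);
this computes the binary code from that list of gaps. -/
def binCodeOfGaps : List ℕ → ℕ :=
  List.foldr (fun g c => 2 ^ g * (2 * c + 1)) 0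

lemma sum_raise' (l : List ℕ) (n : ℕ) :
    ((raise' l n).map (2 ^ ·)).sum = 2 ^ n * binCodeOfGaps l := by
  induction l generalizing n with
  | nil => simp [raise', binCodeOfGaps]
  | cons g l ih =>
    simp only [raise', List.map_cons, List.sum_cons, ih, binCodeOfGaps, List.foldr_cons] at *
    ring

lemma binCode_ofNat (n : ℕ) :
    binCode (ofNat (Finset ℕ) n) = binCodeOfGaps (ofNat (List ℕ) n) := by
  have h : ofNat (Finset ℕ) n = raise'Finset (ofNat (List ℕ) n) 0 := by
    show Finset.map _ _ = _
    ext; simp [Denumerable.eqv, Encodable.encode_nat]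
  rw [h, ← one_mul (binCodeOfGaps _), ← pow_zero 2, ← sum_raise']
  rfl

theorem primrec_binCode : Primrec binCode := by
  refine ofNat_iff.2 ((?_ : Primrec binCodeOfGaps).comp (Primrec.ofNat _) |>.of_eq
    fun n => (binCode_ofNat n).symm)
  exact list_foldr Primrec.id (const 0) (nat_mul.comp (nat_pow.comp (const 2) (fst.comp snd))
    (succ.comp (nat_mul.comp (const 2) (snd.comp snd)))).to₂

theorem primrec_halts : Primrec fun x : (ℕ × ℕ) × ℕ => halts x.1.1 x.1.2 x.2 :=
  option_isSome.comp (primrec_evaln.comp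
    (((snd.comp fst).pair ((Primrec.ofNat Code).comp (fst.comp fst))).pair snd))

theorem primrecPred_admissible :
    PrimrecPred fun x : ((ℕ × Claims) × ℕ) × ℕ => Admissible x.1.1.1 x.1.1.2 x.1.2 x.2 := by
  have hfresh : PrimrecRel fun (q : ℕ × ℕ) (eb : ℕ × ℕ) => q.1 < eb.1 → 2 ^ (q.2 + 1) ∣ eb.2 :=
    ((nat_lt.comp (fst.comp fst) (fst.comp snd)).not.or
      (nat_dvd.comp (nat_pow.comp (const 2) (succ.comp (snd.comp fst))) (snd.comp snd))).of_eq
      fun _ => imp_iff_not_or.symm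
  refine ((Primrec.eq.comp snd (const 0)).not.and
    ((hfresh.forall_mem_list.comp (snd.comp (fst.comp fst)) ((snd.comp fst).pair snd)).and
      (Primrec.eq.comp
        (primrec_halts.comp (((snd.comp fst).pair (fst.comp (fst.comp fst))).pair snd))
        (const true)))).of_eq fun _ => Iff.rfl

theorem primrec_witness : Primrec fun x : (ℕ × Claims) × ℕ => witness x.1.1 x.1.2 x.2 :=
  list_find? (list_range.comp (fst.comp fst)) primrecPred_admissible.decide.to₂

theorem primrecPred_requiresAttention :
    PrimrecPred fun x : (ℕ × Claims) × ℕ => RequiresAttention x.1.1 x.1.2 x.2 := by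
  have hne : PrimrecRel fun (q : ℕ × ℕ) (e : ℕ) => q.1 ≠ e :=
    (Primrec.eq.comp (fst.comp fst) snd).not
  exact (hne.forall_mem_list.comp (snd.comp fst) snd).and
    (Primrec.eq.comp (option_isSome.comp primrec_witness) (const true))

theorem primrec_actor : Primrec₂ actor :=
  list_find? (list_range.comp (succ.comp fst)) primrecPred_requiresAttention.decide.to₂

theorem primrec_step : Primrec₂ step := by
  have hfilter : Primrec₂ fun (K : Claims) (e : ℕ) => K.filter (·.1 < e) :=
    PrimrecRel.listFilter (R := fun (q : ℕ × ℕ) e => q.1 < e) (nat_lt.comp (fst.comp fst) snd)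
  have hclaim : Primrec₂ fun (x : ℕ × Claims) (e : ℕ) => (e, (witness x.1 x.2 e).getD 0) :=
    (snd.pair (option_getD.comp primrec_witness (const 0))).to₂
  refine (option_casesOn primrec_actor snd
    (list_append.comp (hfilter.comp (snd.comp fst) snd)
      (list_cons.comp hclaim (const []))).to₂).of_eq fun x => ?_
  simp only [step]
  cases actor x.1 x.2 <;> rfl

theorem primrec_claims : Primrec claims :=
  (nat_rec₁ [] primrec_step).of_eq fun s => by induction s <;> simp [claims, *]

theorem primrecRel_endExtends : PrimrecRel EndExtends :=
  ((Primrec.eq.comp snd (const 0)).not.and ((nat_lt.comp snd fst).and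
    (Primrec.eq.comp (nat_mod.comp fst (nat_pow.comp (const 2) (succ.comp snd))) snd))).of_eq
    fun _ => Iff.rfl

theorem primrec_extendedClaim : Primrec extendedClaim :=
  option_map (list_find? primrec_claims
    (primrecRel_endExtends.decide.comp fst (snd.comp snd)).to₂) (snd.comp snd).to₂

theorem primrec_colorCode : Primrec colorCode := by
  have hstep : Primrec₂ fun (_ : ℕ) (L : List Bool) =>
      some ((extendedClaim L.length).elim false fun b => !L.getD b false) :=
    (option_some.comp (option_casesOn (primrec_extendedClaim.comp (list_length.comp snd)) (const false)
      (Primrec.not.comp ((list_getD false).comp (snd.comp fst) snd)).to₂)).to₂.of_eq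
      fun _ L => by cases extendedClaim L.length <;> rfl
  refine (nat_strong_rec (fun _ => colorCode) hstep fun _ n => ?_).comp (const 0) Primrec.id
  rw [colorCode_eq, List.length_map, List.length_range]
  cases h : extendedClaim n with
  | none => rfl
  | some b => simp [List.getD_eq_getElem?_getD, lt_of_extendedClaim_eq_some h]

theorem computable_coloring : Computable coloring :=
  (primrec_colorCode.comp primrec_binCode).to_comp

lemma _root_.CEFam.exists_index {𝒲 : Set (Finset ℕ)} (h : CEFam 𝒲) :
    ∃ e, ∀ B, B ∈ 𝒲 ↔ ∃ s, halts e s (binCode B) := by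
  obtain ⟨R, hR, rfl⟩ := h
  -- search for `k = ⟨x, m⟩` with `binCode (ofNat m) = n` and `R x (ofNat m)`
  let test (n k : ℕ) : Bool :=
    binCode (ofNat (Finset ℕ) k.unpair.2) == n && R k.unpair.1 (ofNat (Finset ℕ) k.unpair.2)
  have htest : Computable₂ test := by
    have hset : Computable fun p : ℕ × ℕ => ofNat (Finset ℕ) p.2.unpair.2 :=
      ((Primrec.ofNat _).comp (snd.comp (unpair.comp snd))).to_comp
    exact (Primrec.and.to_comp.comp
      (Primrec.beq.to_comp.comp (primrec_binCode.to_comp.comp hset) Computable.fst)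
      (hR.comp (Computable.fst.comp (Computable.unpair.comp Computable.snd)) hset)).to₂
  obtain ⟨c, hc⟩ := Nat.Partrec.Code.exists_code.1 (Partrec.nat_iff.1
    (Partrec.rfind (htest.partrec₂ : Partrec₂ fun n k => (Part.some (test n k)))))
  refine ⟨encode c, fun B => ?_⟩
  rw [exists_halts_iff, hc]
  simp only [Set.mem_ofPred_eq, Nat.rfind_dom, PFun.coe_val, Part.mem_some_iff, Bool.true_eq,
    Bool.and_eq_true, beq_iff_eq, Part.some_dom, implies_true, and_true, test]
  constructor
  · rintro ⟨x, hx⟩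
    have hB : ofNat (Finset ℕ) (eqv (Finset ℕ) B) = B := (eqv (Finset ℕ)).symm_apply_apply B
    exact ⟨Nat.pair x (eqv (Finset ℕ) B), by simp [hB, hx]⟩
  · rintro ⟨k, hcode, hR⟩
    rw [binCode_injective hcode] at hR
    exact ⟨_, hR⟩

end Computability

theorem exists_coloring_union_ne {𝒲 : Set (Finset ℕ)} (hce : CEFam 𝒲) (hip : GeneratesIP 𝒲) :
    ∃ B ∈ 𝒲, ∃ D ∈ 𝒲, B.Nonempty ∧ coloring (B ∪ D) ≠ coloring B := by
  obtain ⟨e, he⟩ := hce.exists_index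
  obtain ⟨𝒟, h𝒟, hinf, hdisj⟩ := hip
  have hsupply : ∀ r, ∃ b, b ≠ 0 ∧ 2 ^ r ∣ b ∧ ∃ t, ∀ s ≥ t, halts e s b := fun r => by
    obtain ⟨D, hD, hDne, hDr⟩ := hinf.exists_mem_nonempty_forall_lt hdisj r
    obtain ⟨t, ht⟩ := (he D).1 (h𝒟 hD)
    exact ⟨binCode D, binCode_ne_zero hDne, two_pow_dvd_binCode fun i hi => (hDr i hi).le,
      t, fun s hs => halts_mono hs ht⟩
  obtain ⟨s₀, b, hb⟩ := exists_forall_mem_claims hsupply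
  obtain ⟨hb0, ⟨t, hbt⟩, -⟩ := (wellFormed_claims s₀).2 _ (hb s₀ le_rfl)
  set B := b.bitIndices.toFinset
  have hBb : binCode B = b := Finset.sum_toFinset_bitIndices_two_pow b
  have hBne : B.Nonempty := Finset.nonempty_iff_ne_empty.2 fun h => hb0 (by rw [← hBb, h]; rfl)
  obtain ⟨D, hD, hDne, hDr⟩ := hinf.exists_mem_nonempty_forall_lt hdisj (max s₀ b)
  have hext : EndExtends (binCode (B ∪ D)) b := hBb ▸ endExtends_binCode_union hBne hDne
    fun i hi => hBb ▸ (le_max_right _ _).trans_lt (hDr i hi)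
  have hstage : s₀ ≤ binCode (B ∪ D) := by
    obtain ⟨i, hi⟩ := hDne
    exact ((le_max_left _ _).trans_lt (hDr i hi)).le.trans
      (lt_binCode_of_mem (Finset.mem_union_right B hi)).le
  refine ⟨B, (he B).2 ⟨t, hBb ▸ hbt⟩, D, h𝒟 hD, hBne, ?_⟩
  rw [coloring, coloring, colorCode_eq, extendedClaim_eq_some (hb _ hstage) hext, hBb]
  exact Bool.not_ne_self _

end PriorityColoring

/-- There is a computable 2-coloring with no computably enumerable monochromatic
IP set. -/
theorem no_ce_monochromatic :
    ∃ c : Finset ℕ → Bool, Computable c ∧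
      ∀ 𝒲 : Set (Finset ℕ), CEFam 𝒲 → GeneratesIP 𝒲 →
        ¬ ∃ b : Bool, ∀ T ∈ NU 𝒲, c T = b := by
  refine ⟨PriorityColoring.coloring, PriorityColoring.computable_coloring,
    fun 𝒲 hce hip ⟨c, hc⟩ => ?_⟩
  obtain ⟨B, hB, D, hD, hBne, hne⟩ := PriorityColoring.exists_coloring_union_ne hce hip
  have hBD := hc _ (union_mem_NU hB hD (hBne.mono Finset.subset_union_left))
  have hBB := hc _ (union_mem_NU hB hB (by rwa [Finset.union_self]))
  rw [Finset.union_self] at hBB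
  exact hne (hBD.trans hBB.symm)
end

section
/- Let {𝒟_n} be an increasing sequence of finite families of pairwise disjoint finite subsets of ℕ with |𝒟_{n+1}| = |𝒟_n| + 1, enumerated as 𝒟 = {D_0, D_1, D_2, …} with max D_i < min D_{i+1}, and suppose that for every n, every D ∈ NU(𝒟_n) \ 𝒟_n is half-matched by a fixed finite family ℬ. Then the family 𝒟' := {D_{2i} ∪ D_{2i+1} : i ∈ ℕ} satisfies: every element of NU(𝒟') is half-matched by ℬ, and 𝒟' generates an IP set. -/
/-- If every proper union from each initial family `{D_0,…,D_n}` is half-matched by `ℬ`,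
then every nonempty union from the pair family `{D_{2i} ∪ D_{2i+1}}` is half-matched
by `ℬ`, and the pair family generates an IP set. -/
theorem pair_family_half_matched {α : Type*} (c : Finset ℕ → α)
    (ℬ : Finset (Finset ℕ)) (D : ℕ → Finset ℕ)
    (hne : ∀ n, (D n).Nonempty)
    (hsep : ∀ n, ∀ x ∈ D n, ∀ y ∈ D (n + 1), x < y)
    (hmatch : ∀ n, ∀ T ∈ NU {S | ∃ i ≤ n, S = D i},
      T ∉ {S | ∃ i ≤ n, S = D i} → HalfMatch c ↑ℬ T) :
    (∀ T ∈ NU {S | ∃ i, S = D (2 * i) ∪ D (2 * i + 1)}, HalfMatch c ↑ℬ T) ∧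
      GeneratesIP {S | ∃ i, S = D (2 * i) ∪ D (2 * i + 1)} := by
  classical
  have hlt : ∀ m n, m < n → ∀ x ∈ D m, ∀ y ∈ D n, x < y := by
    intro m n hmn
    induction n with
    | zero => omega
    | succ k ih =>
      intro x hx y hy
      rcases Nat.lt_succ_iff_lt_or_eq.mp hmn with h | h
      · obtain ⟨z, hz⟩ := hne k
        exact (ih h x hx z hz).trans (hsep k z hz y hy)
      · subst h; exact hsep m x hx y hy
  have hdisj : ∀ m n, m ≠ n → Disjoint (D m) (D n) := by
    intro m n hmn
    rcases hmn.lt_or_gt with h | h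
    · exact Finset.disjoint_left.mpr fun a ha hb => lt_irrefl a (hlt m n h a ha a hb)
    · exact Finset.disjoint_left.mpr fun a ha hb => lt_irrefl a (hlt n m h a hb a ha)
  have hsubeq : ∀ a j, D a ⊆ D j → a = j := by
    intro a j hsub
    by_contra h
    obtain ⟨x, hx⟩ := hne a
    exact Finset.disjoint_left.mp (hdisj a j h) hx (hsub hx)
  constructor
  · rintro T ⟨hTne, F, hF, rfl⟩
    set idx : Finset ℕ → ℕ := fun S =>
      if h : ∃ i, S = D (2 * i) ∪ D (2 * i + 1) then h.choose else 0 with hidxdef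
    have hspec : ∀ S ∈ F, S = D (2 * idx S) ∪ D (2 * idx S + 1) := by
      intro S hS
      have h : ∃ i, S = D (2 * i) ∪ D (2 * i + 1) := hF hS
      simp only [hidxdef, dif_pos h]
      exact h.choose_spec
    set n : ℕ := 2 * F.sup idx + 1 with hn
    set F' : Finset (Finset ℕ) :=
      F.biUnion (fun S => {D (2 * idx S), D (2 * idx S + 1)}) with hF'
    have hsup : F'.sup id = F.sup id := by
      rw [hF', Finset.sup_biUnion]
      refine Finset.sup_congr rfl ?_
      intro S hS
      rw [Finset.sup_insert, Finset.sup_singleton]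
      exact ((hspec S hS).symm : _)
    have hFne : F.Nonempty := by
      rcases F.eq_empty_or_nonempty with rfl | h
      · simp [Finset.sup_empty] at hTne
      · exact h
    have hmem : F.sup id ∈ NU {S | ∃ i ≤ n, S = D i} := by
      refine ⟨hTne, F', ?_, hsup.symm⟩
      intro S hS
      simp only [hF', Finset.coe_biUnion, Set.mem_iUnion, Finset.mem_coe,
        Finset.mem_insert, Finset.mem_singleton] at hS
      obtain ⟨U, hU, hSU⟩ := hS
      have hle : idx U ≤ F.sup idx := Finset.le_sup hU
      rcases hSU with rfl | rfl
      · exact ⟨2 * idx U, by omega, rfl⟩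
      · exact ⟨2 * idx U + 1, by omega, rfl⟩
    have hnotmem : F.sup id ∉ {S | ∃ i ≤ n, S = D i} := by
      rintro ⟨j, hj, hEq⟩
      obtain ⟨S, hS⟩ := hFne
      have hsub : S ⊆ F.sup id := Finset.le_sup (f := id) hS
      have h1 : D (2 * idx S) ⊆ D j := by
        rw [← hEq]; exact fun x hx => hsub (by rw [hspec S hS]; exact Finset.mem_union_left _ hx)
      have h2 : D (2 * idx S + 1) ⊆ D j := by
        rw [← hEq]; exact fun x hx => hsub (by rw [hspec S hS]; exact Finset.mem_union_right _ hx)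
      have e1 := hsubeq _ _ h1
      have e2 := hsubeq _ _ h2
      omega
    exact hmatch n (F.sup id) hmem hnotmem
  · refine ⟨{S | ∃ i, S = D (2 * i) ∪ D (2 * i + 1)}, le_refl _, ?_, ?_⟩
    · have : {S | ∃ i, S = D (2 * i) ∪ D (2 * i + 1)} =
          Set.range (fun i => D (2 * i) ∪ D (2 * i + 1)) := by
        ext S; simp [eq_comm]
      rw [this]
      apply Set.infinite_range_of_injective
      intro i j hij
      by_contra h
      have hd : Disjoint (D (2 * i) ∪ D (2 * i + 1)) (D (2 * j) ∪ D (2 * j + 1)) := by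
        simp only [Finset.disjoint_union_left, Finset.disjoint_union_right]
        exact ⟨⟨hdisj _ _ (by omega), hdisj _ _ (by omega)⟩,
          ⟨hdisj _ _ (by omega), hdisj _ _ (by omega)⟩⟩
      rw [show D (2 * i) ∪ D (2 * i + 1) = D (2 * j) ∪ D (2 * j + 1) from hij] at hd
      obtain ⟨x, hx⟩ := hne (2 * j)
      exact Finset.disjoint_left.mp hd (Finset.mem_union_left _ hx) (Finset.mem_union_left _ hx)
    · rintro S ⟨i, rfl⟩ T ⟨j, rfl⟩ hST
      have hij : i ≠ j := by rintro rfl; exact hST rfl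
      simp only [Finset.disjoint_union_left, Finset.disjoint_union_right]
      exact ⟨⟨hdisj _ _ (by omega), hdisj _ _ (by omega)⟩,
        ⟨hdisj _ _ (by omega), hdisj _ _ (by omega)⟩⟩
end
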